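/- arXiv:2205.11874 — 10 statements merged into one kernel-verified Lean document; each statement's English description precedes it below -/
import Mathlib

section
/- Let ρ(x) = max(0,x) be the ReLU function applied coordinate-wise. For network parameters θ = (W_1,…,W_L,b_1,…,b_L) and θ' = (W'_1,…,W'_L,b'_1,…,b'_L) with matching dimensions, any exponent q ∈ [1,∞], and any input x ∈ ℝ^{N_0}, the realizations satisfy ‖R_θ(x) − R_{θ'}(x)‖_q ≤ Σ_{ℓ=1}^{L} (∏_{k=ℓ+1}^{L} ‖W_k‖_{op,q}) · ‖W_ℓ − W'_ℓ‖_{op,q} · ‖R_{θ'_{ℓ−1}}(x)‖_q + Σ_{ℓ=1}^{L} (∏_{k=ℓ+1}^{L} ‖W_k‖_{op,q}) · ‖b_ℓ − b'_ℓ‖_q, where θ'_{ℓ−1} denotes the truncated network (W'_1,…,W'_{ℓ−1},b'_1,…,b'_{ℓ−1}) with the convention R_{θ'_0}(x) = x and empty products equal to 1. -/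
/-!
ReLU is 1-Lipschitz and fixes 0, so a hidden layer is no farther from its perturbation, and no
larger, than the affine map feeding it. Writing `W h + b - (W' h' + b') = W (h - h') + (W - W') h'
+ (b - b')`, the error `eₗ` after layer `ℓ` obeys `eₗ₊₁ ≤ ‖Wₗ‖ eₗ + ‖Wₗ - W'ₗ‖ ‖R_{θ'ₗ}(x)‖ +
‖bₗ - b'ₗ‖` with `e₀ = 0`, and the discrete Grönwall inequality unrolls this recursion.
-/

open scoped ENNReal BigOperators

noncomputable section

def relu (x : ℝ) : ℝ := max 0 x

def hiddenLayer (N : ℕ → ℕ) (W : ∀ ℓ : ℕ, Matrix (Fin (N (ℓ + 1))) (Fin (N ℓ)) ℝ)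
    (b : ∀ ℓ : ℕ, Fin (N (ℓ + 1)) → ℝ) : (ℓ : ℕ) → (Fin (N 0) → ℝ) → Fin (N ℓ) → ℝ
  | 0, x => x
  | ℓ + 1, x => fun i => relu ((W ℓ).mulVec (hiddenLayer N W b ℓ x) i + b ℓ i)

def realization (N : ℕ → ℕ) (W : ∀ ℓ : ℕ, Matrix (Fin (N (ℓ + 1))) (Fin (N ℓ)) ℝ)
    (b : ∀ ℓ : ℕ, Fin (N (ℓ + 1)) → ℝ) (L : ℕ) (x : Fin (N 0) → ℝ) : Fin (N L) → ℝ :=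
  match L with
  | 0 => x
  | ℓ + 1 => (W ℓ).mulVec (hiddenLayer N W b ℓ x) + b ℓ

def qnorm (q : ℝ≥0∞) [Fact (1 ≤ q)] {n : ℕ} (x : Fin n → ℝ) : ℝ :=
  ‖(WithLp.equiv q (Fin n → ℝ)).symm x‖

def opqnorm (q : ℝ≥0∞) [Fact (1 ≤ q)] {m n : ℕ} (M : Matrix (Fin m) (Fin n) ℝ) : ℝ :=
  sInf {c : ℝ | 0 ≤ c ∧ ∀ x : Fin n → ℝ, qnorm q (M.mulVec x) ≤ c * qnorm q x}

def rectId (m n : ℕ) : Matrix (Fin m) (Fin n) ℝ :=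
  Matrix.of fun i j => if (i : ℕ) = (j : ℕ) then 1 else 0

theorem PiLp.norm_le_norm_of_forall_norm_apply_le {p : ℝ≥0∞} [Fact (1 ≤ p)] {ι : Type*}
    [Fintype ι] {β : ι → Type*} [∀ i, SeminormedAddCommGroup (β i)] {f g : PiLp p β}
    (h : ∀ i, ‖f i‖ ≤ ‖g i‖) : ‖f‖ ≤ ‖g‖ := by
  rcases eq_or_ne p ∞ with rfl | hp
  · rw [PiLp.norm_eq_ciSup, PiLp.norm_eq_ciSup]
    cases isEmpty_or_nonempty ι
    · simp
    · exact ciSup_mono (Finite.bddAbove_range _) h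
  · have hp0 : 0 < p.toReal :=
      ENNReal.toReal_pos (zero_lt_one.trans_le Fact.out).ne' hp
    rw [PiLp.norm_eq_sum hp0, PiLp.norm_eq_sum hp0]
    gcongr with i
    exact h i

theorem abs_relu_sub_relu_le (a c : ℝ) : |relu a - relu c| ≤ |a - c| := by
  simpa only [relu, max_comm] using abs_max_sub_max_le_abs a c 0

theorem abs_relu_le (a : ℝ) : |relu a| ≤ |a| := by
  simpa [relu] using abs_relu_sub_relu_le a 0

section Norms

variable (q : ℝ≥0∞) [Fact (1 ≤ q)] {m n : ℕ}

theorem qnorm_eq_norm_toLp (x : Fin n → ℝ) : qnorm q x = ‖WithLp.toLp q x‖ := rfl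

theorem qnorm_add_le (u v : Fin n → ℝ) : qnorm q (u + v) ≤ qnorm q u + qnorm q v :=
  norm_add_le (WithLp.toLp q u) (WithLp.toLp q v)

theorem qnorm_le_qnorm_of_forall_abs_le {u v : Fin n → ℝ} (h : ∀ i, |u i| ≤ |v i|) :
    qnorm q u ≤ qnorm q v :=
  PiLp.norm_le_norm_of_forall_norm_apply_le h

theorem opqnorm_eq_norm_toLpLin (M : Matrix (Fin m) (Fin n) ℝ) :
    opqnorm q M = ‖LinearMap.toContinuousLinearMap (M.toLpLin q q)‖ := by
  rw [ContinuousLinearMap.norm_def, opqnorm]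
  congr 1
  ext c
  refine and_congr_right fun _ => ⟨fun h y => h y.ofLp, fun h y => h (WithLp.toLp q y)⟩

theorem opqnorm_nonneg (M : Matrix (Fin m) (Fin n) ℝ) : 0 ≤ opqnorm q M := by
  rw [opqnorm_eq_norm_toLpLin]
  exact norm_nonneg _

theorem qnorm_mulVec_le (M : Matrix (Fin m) (Fin n) ℝ) (x : Fin n → ℝ) :
    qnorm q (M.mulVec x) ≤ opqnorm q M * qnorm q x := by
  rw [opqnorm_eq_norm_toLpLin]
  exact (LinearMap.toContinuousLinearMap (M.toLpLin q q)).le_opNorm (WithLp.toLp q x)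

end Norms

section Network

variable (q : ℝ≥0∞) [Fact (1 ≤ q)] (N : ℕ → ℕ)
  (W W' : ∀ ℓ : ℕ, Matrix (Fin (N (ℓ + 1))) (Fin (N ℓ)) ℝ)
  (b b' : ∀ ℓ : ℕ, Fin (N (ℓ + 1)) → ℝ) (x : Fin (N 0) → ℝ)

theorem qnorm_hiddenLayer_sub_le (ℓ : ℕ) :
    qnorm q (hiddenLayer N W b ℓ x - hiddenLayer N W' b' ℓ x) ≤
      qnorm q (realization N W b ℓ x - realization N W' b' ℓ x) := by
  cases ℓ with
  | zero => rfl
  | succ ℓ => exact qnorm_le_qnorm_of_forall_abs_le q fun i => abs_relu_sub_relu_le _ _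

theorem qnorm_hiddenLayer_le (ℓ : ℕ) :
    qnorm q (hiddenLayer N W b ℓ x) ≤ qnorm q (realization N W b ℓ x) := by
  cases ℓ with
  | zero => rfl
  | succ ℓ => exact qnorm_le_qnorm_of_forall_abs_le q fun i => abs_relu_le _

theorem realization_succ_sub_realization_succ (ℓ : ℕ) :
    realization N W b (ℓ + 1) x - realization N W' b' (ℓ + 1) x =
      (W ℓ).mulVec (hiddenLayer N W b ℓ x - hiddenLayer N W' b' ℓ x) +
        ((W ℓ - W' ℓ).mulVec (hiddenLayer N W' b' ℓ x) + (b ℓ - b' ℓ)) := by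
  simp only [realization, Matrix.mulVec_sub, Matrix.sub_mulVec]
  abel

theorem qnorm_realization_succ_sub_le (ℓ : ℕ) :
    qnorm q (realization N W b (ℓ + 1) x - realization N W' b' (ℓ + 1) x) ≤
      opqnorm q (W ℓ) * qnorm q (realization N W b ℓ x - realization N W' b' ℓ x) +
        (opqnorm q (W ℓ - W' ℓ) * qnorm q (realization N W' b' ℓ x) +
          qnorm q (b ℓ - b' ℓ)) := by
  rw [realization_succ_sub_realization_succ]
  set h := hiddenLayer N W b ℓ x
  set h' := hiddenLayer N W' b' ℓ x
  calc qnorm q ((W ℓ).mulVec (h - h') + ((W ℓ - W' ℓ).mulVec h' + (b ℓ - b' ℓ)))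
      ≤ qnorm q ((W ℓ).mulVec (h - h')) +
          (qnorm q ((W ℓ - W' ℓ).mulVec h') + qnorm q (b ℓ - b' ℓ)) :=
        (qnorm_add_le q _ _).trans (add_le_add_right (qnorm_add_le q _ _) _)
    _ ≤ opqnorm q (W ℓ) * qnorm q (h - h') +
          (opqnorm q (W ℓ - W' ℓ) * qnorm q h' + qnorm q (b ℓ - b' ℓ)) := by
        gcongr <;> apply qnorm_mulVec_le
    _ ≤ _ := by
        gcongr
        exacts [opqnorm_nonneg q _, qnorm_hiddenLayer_sub_le q N W W' b b' x ℓ,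
          opqnorm_nonneg q _, qnorm_hiddenLayer_le q N W' b' x ℓ]

end Network

theorem relu_network_perturbation_bound_general (q : ℝ≥0∞) [Fact (1 ≤ q)]
    (N : ℕ → ℕ) (L : ℕ)
    (W W' : ∀ ℓ : ℕ, Matrix (Fin (N (ℓ + 1))) (Fin (N ℓ)) ℝ)
    (b b' : ∀ ℓ : ℕ, Fin (N (ℓ + 1)) → ℝ) (x : Fin (N 0) → ℝ) :
    qnorm q (realization N W b L x - realization N W' b' L x) ≤
      (∑ ℓ ∈ Finset.range L,
          (∏ k ∈ Finset.Ico (ℓ + 1) L, opqnorm q (W k)) * opqnorm q (W ℓ - W' ℓ) *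
            qnorm q (realization N W' b' ℓ x)) +
        ∑ ℓ ∈ Finset.range L,
          (∏ k ∈ Finset.Ico (ℓ + 1) L, opqnorm q (W k)) * qnorm q (b ℓ - b' ℓ) := by
  have gronwall := discrete_gronwall_prod_general
    (u := fun ℓ => qnorm q (realization N W b ℓ x - realization N W' b' ℓ x))
    (fun ℓ _ => qnorm_realization_succ_sub_le q N W W' b b' x ℓ)
    (fun ℓ _ => opqnorm_nonneg q (W ℓ)) (Nat.zero_le L)
  have input_error : qnorm q (realization N W b 0 x - realization N W' b' 0 x) = 0 := by
    simp [realization, qnorm_eq_norm_toLp]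
  rw [input_error, zero_mul, zero_add, ← Finset.range_eq_Ico] at gronwall
  refine gronwall.trans_eq ?_
  rw [← Finset.sum_add_distrib]
  exact Finset.sum_congr rfl fun ℓ _ => by ring

/-- Layerwise perturbation bound for ReLU network realizations:
for parameters `θ = (W, b)` and `θ' = (W', b')` with matching dimensions, any `q ∈ [1,∞]`
and any input `x`, the `q`-norm of the difference of realizations is bounded by the sum over
layers of the products of operator norms of subsequent weight matrices times the perturbation
of the current layer (weights acting on the truncated realization of `θ'`, and biases). -/
theorem relu_network_perturbation_bound (q : ℝ≥0∞) [Fact (1 ≤ q)]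
    (N : ℕ → ℕ) (L : ℕ) (hL : 1 ≤ L)
    (W W' : ∀ ℓ : ℕ, Matrix (Fin (N (ℓ + 1))) (Fin (N ℓ)) ℝ)
    (b b' : ∀ ℓ : ℕ, Fin (N (ℓ + 1)) → ℝ) (x : Fin (N 0) → ℝ) :
    qnorm q (realization N W b L x - realization N W' b' L x) ≤
      (∑ ℓ ∈ Finset.range L,
          (∏ k ∈ Finset.Ico (ℓ + 1) L, opqnorm q (W k)) * opqnorm q (W ℓ - W' ℓ) *
            qnorm q (realization N W' b' ℓ x)) +
        ∑ ℓ ∈ Finset.range L,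
          (∏ k ∈ Finset.Ico (ℓ + 1) L, opqnorm q (W k)) * qnorm q (b ℓ - b' ℓ) :=
  relu_network_perturbation_bound_general q N L W W' b b' x
end
end

section
/- Let ρ be the ReLU. Fix an architecture (L,(N_0,…,N_L)), nonnegative scalars λ_1,…,λ_L, ε ≥ 0, and let s = min_ℓ N_ℓ. Define θ by W_ℓ = λ_ℓ I_{N_ℓ×N_{ℓ−1}} (rectangular identity), b_ℓ = 0, and θ' by W'_ℓ = (1+ε)W_ℓ, b'_ℓ = 0. Then for any input x ∈ ℝ^{N_0} with nonnegative entries supported on the first s coordinates, and any q ∈ [1,∞], one has ‖R_θ(x) − R_{θ'}(x)‖_q = ((1+ε)^L − 1) · (∏_{ℓ=1}^L λ_ℓ) · ‖x‖_q. -/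
open scoped ENNReal BigOperators

noncomputable section

/- With `W_ℓ = c_ℓ • I` and zero biases, a nonnegative input supported on the first `s` coordinates
is only ever rescaled: the rectangular identity copies the first `s` coordinates whenever every
width is at least `s`, and ReLU acts as the identity on nonnegative vectors. Hence
`R_θ(x) = (∏ λ_ℓ) x` and `R_θ'(x) = (1 + ε)^L (∏ λ_ℓ) x`, padded or truncated to width `N_L`,
which changes no `q`-norm. -/

lemma Fin.sum_univ_eq_sum_univ_of_le {M : Type*} [AddCommMonoid M] {m s : ℕ} (hs : s ≤ m)
    {f : ℕ → M} (hf : ∀ k, s ≤ k → f k = 0) :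
    ∑ i : Fin m, f i = ∑ i : Fin s, f i := by
  rw [Fin.sum_univ_eq_sum_range f, Fin.sum_univ_eq_sum_range f]
  exact (Finset.sum_subset (Finset.range_subset_range.mpr hs) fun k _ hk =>
    hf k (by simpa using hk)).symm

lemma Fin.iSup_eq_iSup_of_le {m s : ℕ} (hs : s ≤ m) {f : ℕ → ℝ} (hf0 : ∀ k, 0 ≤ f k)
    (hf : ∀ k, s ≤ k → f k = 0) :
    ⨆ i : Fin m, f i = ⨆ i : Fin s, f i := by
  have hbdd : ∀ n, BddAbove (Set.range fun i : Fin n => f i) := fun n =>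
    (Set.finite_range _).bddAbove
  have hnonneg : ∀ n, 0 ≤ ⨆ i : Fin n, f i := fun n => Real.iSup_nonneg fun i => hf0 i
  refine le_antisymm (Real.iSup_le (fun i => ?_) (hnonneg s))
    (Real.iSup_le (fun i => le_ciSup (hbdd m) (Fin.castLE hs i)) (hnonneg m))
  by_cases hi : (i : ℕ) < s
  · exact le_ciSup (hbdd s) ⟨i, hi⟩
  · exact (hf i (not_lt.mp hi)).le.trans (hnonneg s)

lemma qnorm_smul (q : ℝ≥0∞) [Fact (1 ≤ q)] {n : ℕ} (a : ℝ) (v : Fin n → ℝ) :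
    qnorm q (a • v) = |a| * qnorm q v := by
  rw [qnorm, WithLp.equiv_symm_apply, WithLp.toLp_smul, norm_smul, Real.norm_eq_abs, qnorm,
    WithLp.equiv_symm_apply]

lemma qnorm_eq_qnorm_restrict (q : ℝ≥0∞) [Fact (1 ≤ q)] {m s : ℕ} (hs : s ≤ m) {g : ℕ → ℝ}
    (hg : ∀ k, s ≤ k → g k = 0) :
    qnorm q (fun i : Fin m => g i) = qnorm q (fun i : Fin s => g i) := by
  rcases eq_or_ne q ⊤ with rfl | hq
  · simp only [qnorm, PiLp.norm_eq_ciSup, WithLp.equiv_symm_apply]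
    exact Fin.iSup_eq_iSup_of_le hs (fun k => norm_nonneg _) fun k hk => by simp [hg k hk]
  · have hp : 0 < q.toReal := ENNReal.toReal_pos (zero_lt_one.trans_le Fact.out).ne' hq
    simp only [qnorm, PiLp.norm_eq_sum hp, WithLp.equiv_symm_apply]
    rw [Fin.sum_univ_eq_sum_univ_of_le hs (f := fun k => ‖g k‖ ^ q.toReal) fun k hk => by
      simp [hg k hk, Real.zero_rpow hp.ne']]

lemma exists_nat_extension_of_support {n s : ℕ} (x : Fin n → ℝ) (hx : ∀ i, 0 ≤ x i)
    (hxs : ∀ i : Fin n, s ≤ (i : ℕ) → x i = 0) :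
    ∃ g : ℕ → ℝ, (∀ k, 0 ≤ g k) ∧ (∀ k, s ≤ k → g k = 0) ∧ x = fun i : Fin n => g i := by
  refine ⟨fun k => if h : k < n then x ⟨k, h⟩ else 0, fun k => ?_, fun k hk => ?_, ?_⟩
  · dsimp only
    split_ifs
    exacts [hx _, le_rfl]
  · dsimp only
    split_ifs with h
    exacts [hxs _ hk, rfl]
  · funext i
    simp

lemma rectId_mulVec_of_support {m n s : ℕ} (hs : s ≤ n) {g : ℕ → ℝ}
    (hg : ∀ k, s ≤ k → g k = 0) :
    (rectId m n).mulVec (fun j : Fin n => g j) = fun i : Fin m => g i := by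
  funext i
  rw [Matrix.mulVec, dotProduct]
  by_cases hi : (i : ℕ) < n
  · rw [Finset.sum_eq_single ⟨i, hi⟩]
    · simp [rectId]
    · intro j _ hj
      simp [rectId, show (i : ℕ) ≠ j from fun h => hj (Fin.ext h.symm)]
    · simp
  · rw [hg i (hs.trans (not_lt.mp hi))]
    refine Finset.sum_eq_zero fun j _ => ?_
    simp [rectId, show (i : ℕ) ≠ j from fun h => hi (h ▸ j.isLt)]

section ScaledIdentityNetwork

variable {N : ℕ → ℕ} {s : ℕ} {c : ℕ → ℝ} {g : ℕ → ℝ}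

lemma hiddenLayer_smul_rectId (hc : ∀ k, 0 ≤ c k) (hg : ∀ k, 0 ≤ g k)
    (hgs : ∀ k, s ≤ k → g k = 0) :
    ∀ ℓ, (∀ k < ℓ, s ≤ N k) →
      hiddenLayer N (fun k => c k • rectId (N (k + 1)) (N k)) (fun _ => 0) ℓ (fun i => g i) =
        (∏ k ∈ Finset.range ℓ, c k) • fun i : Fin (N ℓ) => g i
  | 0, _ => by simp [hiddenLayer]
  | ℓ + 1, hN => by
    funext i
    have hprev := hiddenLayer_smul_rectId hc hg hgs ℓ fun k hk => hN k (hk.trans ℓ.lt_succ_self)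
    have hnonneg : 0 ≤ (∏ k ∈ Finset.range ℓ, c k) * c ℓ * g i :=
      mul_nonneg (mul_nonneg (Finset.prod_nonneg fun k _ => hc k) (hc ℓ)) (hg i)
    simp only [hiddenLayer, hprev, Matrix.smul_mulVec, Matrix.mulVec_smul,
      rectId_mulVec_of_support (hN ℓ ℓ.lt_succ_self) hgs, Pi.smul_apply, smul_eq_mul,
      Pi.zero_apply, add_zero, ← mul_assoc, relu, Finset.prod_range_succ]
    exact max_eq_right hnonneg

lemma realization_smul_rectId (hc : ∀ k, 0 ≤ c k) (hg : ∀ k, 0 ≤ g k)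
    (hgs : ∀ k, s ≤ k → g k = 0) (L : ℕ) (hN : ∀ k < L, s ≤ N k) :
    realization N (fun k => c k • rectId (N (k + 1)) (N k)) (fun _ => 0) L (fun i => g i) =
      (∏ k ∈ Finset.range L, c k) • fun i : Fin (N L) => g i := by
  cases L with
  | zero => simp [realization]
  | succ ℓ =>
    rw [realization, hiddenLayer_smul_rectId hc hg hgs ℓ fun k hk => hN k (hk.trans ℓ.lt_succ_self),
      Matrix.smul_mulVec, Matrix.mulVec_smul, rectId_mulVec_of_support (hN ℓ ℓ.lt_succ_self) hgs,
      add_zero, smul_smul, Finset.prod_range_succ, mul_comm]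

end ScaledIdentityNetwork

theorem relu_network_perturbation_equality_general (q : ℝ≥0∞) [Fact (1 ≤ q)]
    (N : ℕ → ℕ) (L : ℕ)
    (lam : ℕ → ℝ) (hlam : ∀ ℓ, 0 ≤ lam ℓ) (ε : ℝ) (hε : 0 ≤ ε)
    (s : ℕ) (hs : s = (Finset.range (L + 1)).inf' (Finset.nonempty_range_iff.mpr (Nat.succ_ne_zero L)) N)
    (x : Fin (N 0) → ℝ) (hx : ∀ i, 0 ≤ x i) (hxs : ∀ i : Fin (N 0), s ≤ (i : ℕ) → x i = 0) :
    qnorm q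
        (realization N (fun ℓ => lam ℓ • rectId (N (ℓ + 1)) (N ℓ)) (fun ℓ => 0) L x -
          realization N (fun ℓ => ((1 + ε) * lam ℓ) • rectId (N (ℓ + 1)) (N ℓ)) (fun ℓ => 0) L x) =
      ((1 + ε) ^ L - 1) * (∏ ℓ ∈ Finset.range L, lam ℓ) * qnorm q x := by
  obtain ⟨g, hg, hgs, rfl⟩ := exists_nat_extension_of_support x hx hxs
  have hN : ∀ k ≤ L, s ≤ N k := fun k hk =>
    hs ▸ Finset.inf'_le N (Finset.mem_range.mpr (Nat.lt_succ_of_le hk))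
  have hN' : ∀ k < L, s ≤ N k := fun k hk => hN k hk.le
  have hscaled : ∀ k, 0 ≤ (1 + ε) * lam k := fun k => mul_nonneg (by linarith) (hlam k)
  have hgrowth : 1 ≤ (1 + ε) ^ L := one_le_pow₀ (by linarith)
  have hprod : 0 ≤ ∏ ℓ ∈ Finset.range L, lam ℓ := Finset.prod_nonneg fun k _ => hlam k
  rw [realization_smul_rectId hlam hg hgs L hN', realization_smul_rectId hscaled hg hgs L hN',
    ← sub_smul, qnorm_smul, qnorm_eq_qnorm_restrict q (hN L le_rfl) hgs,
    ← qnorm_eq_qnorm_restrict q (hN 0 L.zero_le) hgs, Finset.prod_mul_distrib, Finset.prod_const,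
    Finset.card_range, abs_of_nonpos (by nlinarith)]
  ring

/-- Equality case of the perturbation bound: with `W_ℓ = λ_ℓ I` (rectangular
identity), `W'_ℓ = (1+ε) W_ℓ`, zero biases, and a nonnegative input supported on the first
`s = min_ℓ N_ℓ` coordinates, the difference of realizations has `q`-norm exactly
`((1+ε)^L − 1) (∏ λ_ℓ) ‖x‖_q`. -/
theorem relu_network_perturbation_equality (q : ℝ≥0∞) [Fact (1 ≤ q)]
    (N : ℕ → ℕ) (L : ℕ) (hL : 1 ≤ L)
    (lam : ℕ → ℝ) (hlam : ∀ ℓ, 0 ≤ lam ℓ) (ε : ℝ) (hε : 0 ≤ ε)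
    (s : ℕ) (hs : s = (Finset.range (L + 1)).inf' (Finset.nonempty_range_iff.mpr (Nat.succ_ne_zero L)) N)
    (x : Fin (N 0) → ℝ) (hx : ∀ i, 0 ≤ x i) (hxs : ∀ i : Fin (N 0), s ≤ (i : ℕ) → x i = 0) :
    qnorm q
        (realization N (fun ℓ => lam ℓ • rectId (N (ℓ + 1)) (N ℓ)) (fun ℓ => 0) L x -
          realization N (fun ℓ => ((1 + ε) * lam ℓ) • rectId (N (ℓ + 1)) (N ℓ)) (fun ℓ => 0) L x) =
      ((1 + ε) ^ L - 1) * (∏ ℓ ∈ Finset.range L, lam ℓ) * qnorm q x :=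
  relu_network_perturbation_equality_general q N L lam hlam ε hε s hs x hx hxs
end
end

section
/- Let (𝔽,d) be a metric space, Σ = (Σ_M)_{M∈ℕ} and Σ(γ) = (Σ(γ)_M)_{M∈ℕ} two sequences of nonempty subsets of 𝔽, and γ ∈ ℝ. Suppose there is c > 0 such that for every M, Σ(γ)_M ⊆ Σ_M and Σ(γ)_M is a c·M^{−γ}-covering of Σ_M. Then for every nonempty C ⊆ 𝔽: if γ ≥ γ*(C|Σ) then γ*(C|Σ(γ)) = γ*(C|Σ), and otherwise γ*(C|Σ(γ)) ≥ γ; where γ*(C|Σ) denotes the approximation speed of C by Σ. -/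
open scoped ENNReal BigOperators
open Filter

noncomputable section

/-- The approximation speed `γ*(C|Σ) = sup { γ ∈ ℝ : sup_{f∈C} d(f,Σ_M) = O(M^{−γ}) }`,
as an extended real (`⊥ = −∞` if the set is empty). -/
def approxSpeed {F : Type*} [PseudoMetricSpace F] (C : Set F) (S : ℕ → Set F) : EReal :=
  sSup {x : EReal | ∃ γ : ℝ, x = (γ : EReal) ∧ ∃ c : ℝ, 0 < c ∧
    ∀ᶠ M : ℕ in atTop, ∀ f ∈ C, Metric.infDist f (S M) ≤ c * (M : ℝ) ^ (-γ)}

/-- The encoding speed `γ*(C) = sup { γ > 0 : log₂ N(C,d,ε) = O(ε^{−1/γ}) as ε → 0 }`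
(with value `0` if the supremum is over an empty set), where `N(C,d,ε)` is the minimal
cardinality of a finite subset of `C` whose closed `ε`-balls cover `C`. -/
def encodingSpeed {F : Type*} [PseudoMetricSpace F] (C : Set F) : EReal :=
  sSup ({(0 : EReal)} ∪ {x : EReal | ∃ γ : ℝ, 0 < γ ∧ x = (γ : EReal) ∧ ∃ c : ℝ, 0 < c ∧
    ∀ᶠ ε : ℝ in nhdsWithin 0 (Set.Ioi 0), ∃ X : Finset F, ↑X ⊆ C ∧
      (C ⊆ ⋃ y ∈ X, Metric.closedBall y ε) ∧
      (X.card : ℝ) ≤ 2 ^ (c * ε ^ (-(1 / γ)))})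

/-- `Σ = (Σ_M)` is `γ`-encodable: for every `h > 0` there are `c₁, c₂ > 0` and, for each `M`,
a finite subset of `Σ_M` which is a `c₁ M^{−γ}`-covering of `Σ_M` and whose base-2 log of the
cardinality is at most `c₂ M^{1+h}`. -/
def IsEncodable {F : Type*} [PseudoMetricSpace F] (S : ℕ → Set F) (γ : ℝ) : Prop :=
  ∀ h : ℝ, 0 < h → ∃ c₁ : ℝ, 0 < c₁ ∧ ∃ c₂ : ℝ, 0 < c₂ ∧ ∀ M : ℕ, 1 ≤ M →
    ∃ X : Finset F, ↑X ⊆ S M ∧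
      (S M ⊆ ⋃ y ∈ X, Metric.closedBall y (c₁ * (M : ℝ) ^ (-γ))) ∧
      Real.logb 2 (X.card) ≤ c₂ * (M : ℝ) ^ ((1 : ℝ) + h)

/-- If `Σ(γ)_M ⊆ Σ_M` is (for each `M`) a finite `c·M^{−γ}`-covering of
`Σ_M`, then the approximation speed of any nonempty `C` by `Σ(γ)` equals that by `Σ` whenever
`γ ≥ γ*(C|Σ)`, and is at least `γ` otherwise. -/
theorem approxSpeed_of_coverings {F : Type*} [PseudoMetricSpace F]
    (C : Set F) (hC : C.Nonempty) (S S' : ℕ → Set F)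
    (hS : ∀ M : ℕ, 1 ≤ M → (S M).Nonempty) (hS' : ∀ M : ℕ, 1 ≤ M → (S' M).Nonempty)
    (γ : ℝ) (c : ℝ) (hc : 0 < c)
    (hsub : ∀ M : ℕ, 1 ≤ M → S' M ⊆ S M)
    (hfin : ∀ M : ℕ, 1 ≤ M → (S' M).Finite)
    (hcov : ∀ M : ℕ, 1 ≤ M → S M ⊆ ⋃ y ∈ S' M, Metric.closedBall y (c * (M : ℝ) ^ (-γ))) :
    (approxSpeed C S ≤ (γ : EReal) → approxSpeed C S' = approxSpeed C S) ∧
      ((γ : EReal) < approxSpeed C S → (γ : EReal) ≤ approxSpeed C S') := by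
  classical
  -- key inequality: infDist to S' is controlled by infDist to S plus covering radius
  have key : ∀ M : ℕ, 1 ≤ M → ∀ f : F,
      Metric.infDist f (S' M) ≤ Metric.infDist f (S M) + c * (M : ℝ) ^ (-γ) := by
    intro M hM f
    apply le_of_forall_pos_le_add
    intro ε hε
    have hlt : Metric.infDist f (S M) < Metric.infDist f (S M) + ε := by linarith
    obtain ⟨g, hg, hfg⟩ := (Metric.infDist_lt_iff (hS M hM)).1 hlt
    obtain ⟨y, hy, hgy⟩ := Set.mem_iUnion₂.1 (hcov M hM hg)
    have h1 : Metric.infDist f (S' M) ≤ dist f y := Metric.infDist_le_dist_of_mem hy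
    have h2 : dist f y ≤ dist f g + dist g y := dist_triangle f g y
    have h3 : dist g y ≤ c * (M : ℝ) ^ (-γ) := Metric.mem_closedBall.1 hgy
    linarith
  -- Claim B : if γ' ≤ γ and the O-bound holds for S at γ', it holds for S' at γ'
  have claimB : ∀ γ' : ℝ, γ' ≤ γ →
      (∃ c' : ℝ, 0 < c' ∧ ∀ᶠ M : ℕ in atTop, ∀ f ∈ C,
        Metric.infDist f (S M) ≤ c' * (M : ℝ) ^ (-γ')) →
      (∃ c' : ℝ, 0 < c' ∧ ∀ᶠ M : ℕ in atTop, ∀ f ∈ C,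
        Metric.infDist f (S' M) ≤ c' * (M : ℝ) ^ (-γ')) := by
    intro γ' hγ' ⟨c', hc', hev⟩
    refine ⟨c' + c, by linarith, ?_⟩
    filter_upwards [hev, eventually_ge_atTop 1] with M hM hM1 f hf
    have hM1' : (1 : ℝ) ≤ (M : ℝ) := by exact_mod_cast hM1
    have hmono : (M : ℝ) ^ (-γ) ≤ (M : ℝ) ^ (-γ') :=
      Real.rpow_le_rpow_of_exponent_le hM1' (by linarith)
    have := key M hM1 f
    have := hM f hf
    calc Metric.infDist f (S' M) ≤ Metric.infDist f (S M) + c * (M : ℝ) ^ (-γ) := key M hM1 f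
      _ ≤ c' * (M : ℝ) ^ (-γ') + c * (M : ℝ) ^ (-γ') := by
          have : c * (M : ℝ) ^ (-γ) ≤ c * (M : ℝ) ^ (-γ') :=
            mul_le_mul_of_nonneg_left hmono hc.le
          linarith [hM f hf]
      _ = (c' + c) * (M : ℝ) ^ (-γ') := by ring
  -- Claim A : approxSpeed C S' ≤ approxSpeed C S
  have claimA : approxSpeed C S' ≤ approxSpeed C S := by
    apply sSup_le_sSup
    rintro x ⟨γ', rfl, c', hc', hev⟩
    refine ⟨γ', rfl, c', hc', ?_⟩
    filter_upwards [hev, eventually_ge_atTop 1] with M hM hM1 f hf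
    exact le_trans (Metric.infDist_le_infDist_of_subset (hsub M hM1) (hS' M hM1)) (hM f hf)
  constructor
  · intro hle
    refine le_antisymm claimA ?_
    apply sSup_le
    rintro x hx
    obtain ⟨γ', rfl, hP⟩ := hx
    have hmem : (γ' : EReal) ≤ approxSpeed C S := by
      apply le_sSup; exact ⟨γ', rfl, hP⟩
    have hxle : (γ' : EReal) ≤ (γ : EReal) := le_trans hmem hle
    have hγ' : γ' ≤ γ := by exact_mod_cast hxle
    obtain ⟨c', hc', hev⟩ := claimB γ' hγ' hP
    apply le_sSup; exact ⟨γ', rfl, c', hc', hev⟩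
  · intro hlt
    rw [show approxSpeed C S = sSup {x : EReal | ∃ γ : ℝ, x = (γ : EReal) ∧ ∃ c : ℝ, 0 < c ∧
      ∀ᶠ M : ℕ in atTop, ∀ f ∈ C, Metric.infDist f (S M) ≤ c * (M : ℝ) ^ (-γ)} from rfl] at hlt
    obtain ⟨x, hx, hγx⟩ := lt_sSup_iff.1 hlt
    obtain ⟨γ'', rfl, c', hc', hev⟩ := hx
    have hγγ'' : γ ≤ γ'' := le_of_lt (by exact_mod_cast hγx)
    have hPγ : ∃ c' : ℝ, 0 < c' ∧ ∀ᶠ M : ℕ in atTop, ∀ f ∈ C,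
        Metric.infDist f (S M) ≤ c' * (M : ℝ) ^ (-γ) := by
      refine ⟨c', hc', ?_⟩
      filter_upwards [hev, eventually_ge_atTop 1] with M hM hM1 f hf
      have hM1' : (1 : ℝ) ≤ (M : ℝ) := by exact_mod_cast hM1
      have hmono : (M : ℝ) ^ (-γ'') ≤ (M : ℝ) ^ (-γ) :=
        Real.rpow_le_rpow_of_exponent_le hM1' (by linarith)
      calc Metric.infDist f (S M) ≤ c' * (M : ℝ) ^ (-γ'') := hM f hf
        _ ≤ c' * (M : ℝ) ^ (-γ) := mul_le_mul_of_nonneg_left hmono hc'.le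
    obtain ⟨c₀, hc₀, hev₀⟩ := claimB γ le_rfl hPγ
    apply le_sSup; exact ⟨γ, rfl, c₀, hc₀, hev₀⟩
end
end

section
/- Let (𝔽,d) be a metric space, Σ = (Σ_M)_{M∈ℕ} a sequence of nonempty subsets of 𝔽, and γ ∈ (0,∞]. Suppose Σ is γ-encodable: for every h > 0 there exist constants c_1, c_2 > 0 and finite subsets Σ(γ,h)_M ⊆ Σ_M such that Σ(γ,h)_M is a c_1 M^{−γ}-covering of Σ_M and log₂|Σ(γ,h)_M| ≤ c_2 M^{1+h} for all M. Then for every nonempty C ⊆ 𝔽: min(γ*(C|Σ), γ) ≤ γ*(C), where γ*(C|Σ) is the approximation speed of C by Σ and γ*(C) is the encoding speed of C. -/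
open scoped ENNReal BigOperators
open Filter

noncomputable section

set_option maxHeartbeats 1000000 in
/-- If `Σ` is `γ`-encodable for `γ ∈ (0,∞]` (with `∞`-encodable meaning
`g`-encodable for every real `g > 0`), then for every nonempty `C ⊆ 𝔽`,
`min(γ*(C|Σ), γ) ≤ γ*(C)`. -/
theorem min_approxSpeed_le_encodingSpeed {F : Type*} [PseudoMetricSpace F]
    (C : Set F) (hC : C.Nonempty) (S : ℕ → Set F) (hS : ∀ M : ℕ, 1 ≤ M → (S M).Nonempty)
    (γ : ℝ≥0∞) (hγ : 0 < γ)
    (hEnc : (∃ g : ℝ, 0 < g ∧ γ = ENNReal.ofReal g ∧ IsEncodable S g) ∨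
      (γ = ⊤ ∧ ∀ g : ℝ, 0 < g → IsEncodable S g)) :
    min (approxSpeed C S) (γ : EReal) ≤ encodingSpeed C := by
  classical
  have h0 : (0 : EReal) ≤ encodingSpeed C := le_sSup (Or.inl rfl)
  have key : ∀ t : ℝ, 0 < t → (t : EReal) < approxSpeed C S → (t : EReal) < (γ : EReal) →
      (t : EReal) ≤ encodingSpeed C := by
    intro t ht htA htg
    rw [approxSpeed, lt_sSup_iff] at htA
    obtain ⟨x0, hx0, htx⟩ := htA
    obtain ⟨γ', rfl, c, hc, hev⟩ := hx0
    have htγ' : t < γ' := by exact_mod_cast htx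
    obtain ⟨g, htg', hgEnc⟩ : ∃ g : ℝ, t < g ∧ IsEncodable S g := by
      rcases hEnc with ⟨g, hg0, hγg, hg⟩ | ⟨hγtop, hg⟩
      · refine ⟨g, ?_, hg⟩
        rw [hγg, EReal.coe_ennreal_ofReal] at htg
        have h' : t < max g 0 := by exact_mod_cast htg
        rcases lt_max_iff.mp h' with h' | h'
        · exact h'
        · exact absurd h' (not_lt.mpr ht.le)
      · exact ⟨γ', htγ', hg γ' (ht.trans htγ')⟩
    set m := min γ' g with hmdef
    have htm : t < m := lt_min htγ' htg'
    have hm0 : 0 < m := ht.trans htm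
    have hh : 0 < m / t - 1 := by
      have h1 : 1 < m / t := (one_lt_div ht).mpr htm
      linarith
    obtain ⟨c₁, hc₁, c₂, hc₂, hX⟩ := hgEnc (m / t - 1) hh
    rw [eventually_atTop] at hev
    obtain ⟨M₀, hM₀⟩ := hev
    set N : ℕ := max M₀ 1 with hNdef
    have hN1 : (1 : ℝ) ≤ (N : ℝ) := by exact_mod_cast le_max_right M₀ 1
    set K : ℝ := 2 * (2 * c + c₁) with hKdef
    have hK : 0 < K := by positivity
    set c' : ℝ := c₂ * 2 ^ (m / t) * K ^ (1 / t) with hc'def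
    have hc'pos : 0 < c' := by positivity
    refine le_sSup (Or.inr ⟨t, ht, rfl, c', hc'pos, ?_⟩)
    have hNm : (0 : ℝ) < (N : ℝ) ^ m := Real.rpow_pos_of_pos (by linarith) m
    have hδ : 0 < K / (N : ℝ) ^ m := by positivity
    filter_upwards [Ioo_mem_nhdsGT_of_mem (Set.left_mem_Ico.mpr hδ)] with ε hε
    obtain ⟨hε0, hεδ⟩ := hε
    set x : ℝ := (K / ε) ^ (1 / m) with hxdef
    have hKε : 0 < K / ε := by positivity
    have hxpos : 0 < x := Real.rpow_pos_of_pos hKε _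
    have hNx : (N : ℝ) ≤ x := by
      have h1 : (N : ℝ) ^ m ≤ K / ε := by
        rw [le_div_iff₀ hε0]
        calc (N : ℝ) ^ m * ε ≤ (N : ℝ) ^ m * (K / (N : ℝ) ^ m) :=
              mul_le_mul_of_nonneg_left hεδ.le hNm.le
          _ = K := by field_simp
      calc (N : ℝ) = ((N : ℝ) ^ m) ^ (1 / m) := by
            rw [← Real.rpow_mul (by linarith : (0:ℝ) ≤ (N:ℝ)),
              mul_one_div_cancel hm0.ne', Real.rpow_one]
        _ ≤ x := Real.rpow_le_rpow hNm.le h1 (by positivity)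
    set M : ℕ := ⌈x⌉₊ with hMdef
    have hxM : x ≤ (M : ℝ) := Nat.le_ceil x
    have hNM : (N : ℝ) ≤ (M : ℝ) := le_trans hNx hxM
    have hNMnat : N ≤ M := by exact_mod_cast hNM
    have hM1 : 1 ≤ M := le_trans (le_max_right M₀ 1) hNMnat
    have hM0M : M₀ ≤ M := le_trans (le_max_left M₀ 1) hNMnat
    have hM1R : (1 : ℝ) ≤ (M : ℝ) := by exact_mod_cast hM1
    have hMpos : (0 : ℝ) < (M : ℝ) := by linarith
    have hMm : (0 : ℝ) < (M : ℝ) ^ (-m) := Real.rpow_pos_of_pos hMpos _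
    -- covering radius bound
    have hxm : x ^ m = K / ε := by
      rw [hxdef, ← Real.rpow_mul hKε.le, one_div_mul_cancel hm0.ne', Real.rpow_one]
    have hMmge : K / ε ≤ (M : ℝ) ^ m := by
      rw [← hxm]; exact Real.rpow_le_rpow hxpos.le hxM hm0.le
    have hcov : K * (M : ℝ) ^ (-m) ≤ ε := by
      rw [Real.rpow_neg hMpos.le, ← div_eq_mul_inv, div_le_iff₀ (Real.rpow_pos_of_pos hMpos m)]
      calc K = (K / ε) * ε := by field_simp
        _ ≤ (M : ℝ) ^ m * ε := mul_le_mul_of_nonneg_right hMmge hε0.le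
        _ = ε * (M : ℝ) ^ m := by ring
    obtain ⟨X, hXS, hXcov, hXcard⟩ := hX M hM1
    set r : ℝ := (2 * c + c₁) * (M : ℝ) ^ (-m) with hrdef
    have hr0 : 0 < r := by positivity
    set φ : F → F := fun y =>
      if hy : (C ∩ Metric.closedBall y r).Nonempty then hy.choose else hC.choose with hφdef
    have hφmem : ∀ y, (hy : (C ∩ Metric.closedBall y r).Nonempty) →
        φ y ∈ C ∩ Metric.closedBall y r := by
      intro y hy
      simp only [hφdef, dif_pos hy]
      exact hy.choose_spec
    have hφC : ∀ y, φ y ∈ C := by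
      intro y
      by_cases hy : (C ∩ Metric.closedBall y r).Nonempty
      · exact (hφmem y hy).1
      · simp only [hφdef, dif_neg hy]
        exact hC.choose_spec
    refine ⟨X.image φ, ?_, ?_, ?_⟩
    · intro z hz
      simp only [Finset.coe_image, Set.mem_image, Finset.mem_coe] at hz
      obtain ⟨y, -, rfl⟩ := hz
      exact hφC y
    · intro f hf
      have h3 : Metric.infDist f (S M) ≤ c * (M : ℝ) ^ (-γ') := hM₀ M hM0M f hf
      have hexp : (M : ℝ) ^ (-γ') ≤ (M : ℝ) ^ (-m) :=
        Real.rpow_le_rpow_of_exponent_le hM1R (neg_le_neg (min_le_left _ _))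
      have h4 : Metric.infDist f (S M) < 2 * c * (M : ℝ) ^ (-m) := by
        have h5 : c * (M : ℝ) ^ (-γ') ≤ c * (M : ℝ) ^ (-m) :=
          mul_le_mul_of_nonneg_left hexp hc.le
        have h6 : 0 < c * (M : ℝ) ^ (-m) := mul_pos hc hMm
        linarith
      obtain ⟨s, hsS, hfs⟩ := (Metric.infDist_lt_iff (hS M hM1)).mp h4
      obtain ⟨y, hyX, hsy⟩ : ∃ y ∈ X, s ∈ Metric.closedBall y (c₁ * (M : ℝ) ^ (-g)) := by
        have h6 := hXcov hsS
        simpa using h6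
      have hgexp : (M : ℝ) ^ (-g) ≤ (M : ℝ) ^ (-m) :=
        Real.rpow_le_rpow_of_exponent_le hM1R (neg_le_neg (min_le_right _ _))
      have hsy' : dist s y ≤ c₁ * (M : ℝ) ^ (-m) :=
        le_trans (Metric.mem_closedBall.mp hsy) (mul_le_mul_of_nonneg_left hgexp hc₁.le)
      have hfy : dist f y ≤ r := by
        have h7 := dist_triangle f s y
        have h7' : (2 * c + c₁) * (M : ℝ) ^ (-m)
            = 2 * c * (M : ℝ) ^ (-m) + c₁ * (M : ℝ) ^ (-m) := by ring
        rw [hrdef, h7']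
        linarith
      have hy : (C ∩ Metric.closedBall y r).Nonempty :=
        ⟨f, hf, Metric.mem_closedBall.mpr hfy⟩
      have hφy := hφmem y hy
      refine Set.mem_iUnion₂.mpr ⟨φ y, Finset.mem_image_of_mem φ hyX, ?_⟩
      have h8 : dist y (φ y) ≤ r := by
        rw [dist_comm]; exact Metric.mem_closedBall.mp hφy.2
      have h9 := dist_triangle f y (φ y)
      have h10 : 2 * r = K * (M : ℝ) ^ (-m) := by rw [hrdef, hKdef]; ring
      refine Metric.mem_closedBall.mpr ?_
      calc dist f (φ y) ≤ dist f y + dist y (φ y) := h9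
        _ ≤ 2 * r := by linarith
        _ = K * (M : ℝ) ^ (-m) := h10
        _ ≤ ε := hcov
    · have hcard1 : ((X.image φ).card : ℝ) ≤ (X.card : ℝ) := by
        exact_mod_cast Finset.card_image_le
      have hcard2 : (X.card : ℝ) ≤ 2 ^ (c₂ * (M : ℝ) ^ ((1 : ℝ) + (m / t - 1))) := by
        rcases Nat.eq_zero_or_pos X.card with h | h
        · rw [h]; push_cast; positivity
        · have hpos : (0 : ℝ) < (X.card : ℝ) := by exact_mod_cast h
          calc (X.card : ℝ) = 2 ^ Real.logb 2 (X.card) :=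
                (Real.rpow_logb (by norm_num) (by norm_num) hpos).symm
            _ ≤ _ := Real.rpow_le_rpow_of_exponent_le one_le_two hXcard
      have hexp1 : (1 : ℝ) + (m / t - 1) = m / t := by ring
      have hx1 : (1 : ℝ) ≤ x := le_trans hN1 hNx
      have hM2x : (M : ℝ) ≤ 2 * x := by
        have h1 := Nat.ceil_lt_add_one hxpos.le
        have h2 : (⌈x⌉₊ : ℝ) < x + 1 := h1
        linarith
      have hMexp : (M : ℝ) ^ (m / t) ≤ (2 * x) ^ (m / t) :=
        Real.rpow_le_rpow hMpos.le hM2x (by positivity)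
      have hxexp : (2 * x) ^ (m / t) = 2 ^ (m / t) * (K / ε) ^ (1 / t) := by
        rw [Real.mul_rpow (by norm_num) hxpos.le, hxdef, ← Real.rpow_mul hKε.le]
        congr 2
        field_simp
      have hKεexp : (K / ε) ^ (1 / t) = K ^ (1 / t) * ε ^ (-(1 / t)) := by
        rw [Real.div_rpow hK.le hε0.le, Real.rpow_neg hε0.le, div_eq_mul_inv]
      have hmain : c₂ * (M : ℝ) ^ (m / t) ≤ c' * ε ^ (-(1 / t)) := by
        rw [hc'def]
        calc c₂ * (M : ℝ) ^ (m / t)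
            ≤ c₂ * (2 ^ (m / t) * (K ^ (1 / t) * ε ^ (-(1 / t)))) := by
              refine mul_le_mul_of_nonneg_left ?_ hc₂.le
              rw [← hKεexp, ← hxexp]; exact hMexp
          _ = c₂ * 2 ^ (m / t) * K ^ (1 / t) * ε ^ (-(1 / t)) := by ring
      calc ((X.image φ).card : ℝ)
          ≤ 2 ^ (c₂ * (M : ℝ) ^ ((1 : ℝ) + (m / t - 1))) := le_trans hcard1 hcard2
        _ ≤ 2 ^ (c' * ε ^ (-(1 / t))) := by
            refine Real.rpow_le_rpow_of_exponent_le one_le_two ?_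
            rw [hexp1]; exact hmain
  by_contra hcon
  push_neg at hcon
  obtain ⟨t, hBt, htmin⟩ := EReal.exists_between_coe_real hcon
  have ht0 : (0 : EReal) < (t : EReal) := lt_of_le_of_lt h0 hBt
  have ht0' : 0 < t := by exact_mod_cast ht0
  have h1 := key t ht0' (lt_of_lt_of_le htmin (min_le_left _ _))
    (lt_of_lt_of_le htmin (min_le_right _ _))
  exact absurd h1 (not_le.mpr hBt)
end
end

section
/- Let (𝔽,d) be a metric space, C ⊆ 𝔽 nonempty, and Σ = (Σ_M)_{M∈ℕ} a sequence of nonempty subsets of 𝔽. If Σ is γ-encodable for every γ with 0 < γ < γ*(C|Σ), then γ*(C|Σ) ≤ γ*(C), i.e., the approximation speed of C by Σ is bounded above by the encoding speed of C. -/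
open scoped ENNReal BigOperators
open Filter

noncomputable section

lemma cover_into_set {F : Type*} [PseudoMetricSpace F] {C : Set F} (hC : C.Nonempty)
    (X : Finset F) (R : ℝ) (hcov : ∀ f ∈ C, ∃ y ∈ X, dist f y ≤ R) :
    ∃ Y : Finset F, ↑Y ⊆ C ∧ (∀ f ∈ C, ∃ y ∈ Y, dist f y ≤ 2 * R) ∧ Y.card ≤ X.card := by
  classical
  set g : F → F := fun y => if h : ∃ f ∈ C, dist f y ≤ R then h.choose else hC.choose with hg
  refine ⟨X.image g, ?_, ?_, Finset.card_image_le⟩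
  · intro z hz
    simp only [Finset.coe_image, Set.mem_image, Finset.mem_coe] at hz
    obtain ⟨y, -, rfl⟩ := hz
    by_cases h : ∃ f ∈ C, dist f y ≤ R
    · simp only [hg, dif_pos h]; exact h.choose_spec.1
    · simp only [hg, dif_neg h]; exact hC.choose_spec
  · intro f hf
    obtain ⟨y, hyX, hfy⟩ := hcov f hf
    have h : ∃ f ∈ C, dist f y ≤ R := ⟨f, hf, hfy⟩
    refine ⟨g y, Finset.mem_image_of_mem g hyX, ?_⟩
    have hspec := h.choose_spec
    have hgy : g y = h.choose := by simp [hg, dif_pos h]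
    rw [hgy]
    calc dist f h.choose ≤ dist f y + dist y h.choose := dist_triangle _ _ _
      _ ≤ R + R := add_le_add hfy (by rw [dist_comm]; exact hspec.2)
      _ = 2 * R := by ring

/-- If `Σ` is `γ`-encodable for every real `γ` with
`0 < γ < γ*(C|Σ)`, then the approximation speed of `C` by `Σ` is bounded above by the
encoding speed of `C`. -/
theorem approxSpeed_le_encodingSpeed {F : Type*} [PseudoMetricSpace F]
    (C : Set F) (hC : C.Nonempty) (S : ℕ → Set F) (hS : ∀ M : ℕ, 1 ≤ M → (S M).Nonempty)
    (hEnc : ∀ γ : ℝ, 0 < γ → (γ : EReal) < approxSpeed C S → IsEncodable S γ) :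
    approxSpeed C S ≤ encodingSpeed C := by
  have henc0 : (0 : EReal) ≤ encodingSpeed C :=
    le_sSup (Set.mem_union_left _ rfl)
  have key : ∀ t : ℝ, 0 < t → (t : EReal) < approxSpeed C S →
      (t : EReal) ≤ encodingSpeed C := by
    intro t ht htA
    -- extract an approximation exponent γ > t
    rw [approxSpeed, lt_sSup_iff] at htA
    obtain ⟨x, hx_mem, htx⟩ := htA
    obtain ⟨γ, rfl, c, hc, hev⟩ := hx_mem
    have htγ : t < γ := EReal.coe_lt_coe_iff.mp htx
    set γ' : ℝ := (t + γ) / 2 with hγ'def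
    have ht' : t < γ' := by simp [hγ'def]; linarith
    have hγ'γ : γ' < γ := by simp [hγ'def]; linarith
    have hγ'pos : 0 < γ' := lt_trans ht ht'
    have hγA : (γ : EReal) ≤ approxSpeed C S :=
      le_sSup ⟨γ, rfl, c, hc, hev⟩
    have hγ'A : (γ' : EReal) < approxSpeed C S :=
      lt_of_lt_of_le (EReal.coe_lt_coe_iff.mpr hγ'γ) hγA
    -- encodability at γ' with h = γ'/t - 1
    have hh : (0:ℝ) < γ' / t - 1 := by
      have : 1 < γ' / t := (one_lt_div ht).mpr ht'
      linarith
    obtain ⟨c₁, hc₁, c₂, hc₂, hX⟩ := hEnc γ' hγ'pos hγ'A (γ' / t - 1) hh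
    have hexp : (1:ℝ) + (γ' / t - 1) = γ' / t := by ring
    obtain ⟨M₀, hM₀⟩ := eventually_atTop.mp hev
    set K : ℝ := 2 * (c + c₁ + 1) with hKdef
    have hK : 0 < K := by positivity
    set c' : ℝ := c₂ * 2 ^ (γ' / t) * K ^ (1 / t) with hc'def
    have hc' : 0 < c' := by positivity
    -- show t belongs to the encoding set
    refine le_sSup (Set.mem_union_right _ ⟨t, ht, rfl, c', hc', ?_⟩)
    set M₁ : ℕ := max M₀ 1 with hM₁def
    have hM₁pos : (0:ℝ) < (M₁:ℝ) := by
      have : 1 ≤ M₁ := le_max_right _ _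
      exact_mod_cast Nat.lt_of_lt_of_le Nat.zero_lt_one this
    set δ : ℝ := min K (K / (M₁:ℝ) ^ (γ' : ℝ)) with hδdef
    have hδ : 0 < δ := lt_min hK (by positivity)
    filter_upwards [Ioo_mem_nhdsGT_of_mem (Set.mem_Ico.mpr ⟨le_refl (0:ℝ), hδ⟩)]
      with ε hε
    obtain ⟨hε0, hεδ⟩ := hε
    have hεK : ε ≤ K := le_trans hεδ.le (min_le_left _ _)
    have hεM₁ : ε ≤ K / (M₁:ℝ) ^ (γ' : ℝ) := le_trans hεδ.le (min_le_right _ _)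
    have hKε : 0 < K / ε := by positivity
    set A : ℝ := (K / ε) ^ (γ'⁻¹) with hAdef
    have hA1 : 1 ≤ A := by
      have h1 : 1 ≤ K / ε := (one_le_div hε0).mpr hεK
      calc (1:ℝ) = 1 ^ γ'⁻¹ := (Real.one_rpow _).symm
        _ ≤ A := Real.rpow_le_rpow zero_le_one h1 (by positivity)
    have hApos : 0 < A := lt_of_lt_of_le one_pos hA1
    have hAM₁ : (M₁:ℝ) ≤ A := by
      have h1 : (M₁:ℝ) ^ (γ' : ℝ) ≤ K / ε := by
        rw [le_div_iff₀ hε0]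
        calc (M₁:ℝ) ^ (γ' : ℝ) * ε ≤ (M₁:ℝ) ^ (γ' : ℝ) * (K / (M₁:ℝ) ^ (γ' : ℝ)) := by
              exact mul_le_mul_of_nonneg_left hεM₁ (by positivity)
          _ = K := by field_simp
      calc (M₁:ℝ) = (((M₁:ℝ) ^ (γ' : ℝ)) ^ (γ'⁻¹) : ℝ) :=
            (Real.rpow_rpow_inv (by positivity) hγ'pos.ne').symm
        _ ≤ A := Real.rpow_le_rpow (by positivity) h1 (by positivity)
    set M : ℕ := ⌈A⌉₊ with hMdef
    have hM1 : 1 ≤ M := Nat.one_le_ceil_iff.mpr hApos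
    have hM1R : (1:ℝ) ≤ (M:ℝ) := by exact_mod_cast hM1
    have hMpos : (0:ℝ) < (M:ℝ) := by linarith
    have hMA : A ≤ (M:ℝ) := Nat.le_ceil A
    have hM2A : (M:ℝ) ≤ 2 * A := by
      have := Nat.ceil_lt_add_one hApos.le
      calc (M:ℝ) ≤ A + 1 := this.le
        _ ≤ A + A := by linarith
        _ = 2 * A := by ring
    have hMM₁ : M₁ ≤ M := by
      exact_mod_cast le_trans hAM₁ hMA
    have hMM₀ : M₀ ≤ M := le_trans (le_max_left _ _) hMM₁
    -- covering of S M and approximation bound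
    obtain ⟨X, hXS, hXcov, hXcard⟩ := hX M hM1
    have happrox := hM₀ M hMM₀
    -- cover C by X with radius (c + c₁ + 1) * M^{-γ'}
    have hMγ'pos : (0:ℝ) < (M:ℝ) ^ (-γ' : ℝ) := Real.rpow_pos_of_pos hMpos _
    have hmono : (M:ℝ) ^ (-γ : ℝ) ≤ (M:ℝ) ^ (-γ' : ℝ) :=
      Real.rpow_le_rpow_of_exponent_le hM1R (by linarith)
    have hcov : ∀ f ∈ C, ∃ y ∈ X, dist f y ≤ (c + c₁ + 1) * (M:ℝ) ^ (-γ' : ℝ) := by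
      intro f hf
      have hlt : Metric.infDist f (S M) < c * (M:ℝ) ^ (-γ : ℝ) + (M:ℝ) ^ (-γ' : ℝ) :=
        lt_of_le_of_lt (happrox f hf) (by linarith)
      obtain ⟨g₀, hg₀S, hg₀⟩ := (Metric.infDist_lt_iff (hS M hM1)).mp hlt
      have := hXcov hg₀S
      simp only [Set.mem_iUnion, Metric.mem_closedBall, exists_prop] at this
      obtain ⟨y, hyX, hg₀y⟩ := this
      refine ⟨y, hyX, ?_⟩
      calc dist f y ≤ dist f g₀ + dist g₀ y := dist_triangle _ _ _
        _ ≤ (c * (M:ℝ) ^ (-γ : ℝ) + (M:ℝ) ^ (-γ' : ℝ)) + c₁ * (M:ℝ) ^ (-γ' : ℝ) := by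
            exact add_le_add hg₀.le hg₀y
        _ ≤ (c * (M:ℝ) ^ (-γ' : ℝ) + (M:ℝ) ^ (-γ' : ℝ)) + c₁ * (M:ℝ) ^ (-γ' : ℝ) := by
            have := mul_le_mul_of_nonneg_left hmono hc.le
            linarith
        _ = (c + c₁ + 1) * (M:ℝ) ^ (-γ' : ℝ) := by ring
    obtain ⟨Y, hYC, hYcov, hYcard⟩ := cover_into_set hC X _ hcov
    have hKM : K * (M:ℝ) ^ (-γ' : ℝ) ≤ ε := by
      have hMγ' : K / ε ≤ (M:ℝ) ^ (γ' : ℝ) := by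
        calc K / ε = A ^ (γ' : ℝ) := (Real.rpow_inv_rpow hKε.le hγ'pos.ne').symm
          _ ≤ (M:ℝ) ^ (γ' : ℝ) := Real.rpow_le_rpow hApos.le hMA hγ'pos.le
      have hMγ'pos2 : (0:ℝ) < (M:ℝ) ^ (γ' : ℝ) := Real.rpow_pos_of_pos hMpos _
      rw [Real.rpow_neg hMpos.le]
      rw [← div_eq_mul_inv]
      calc K / (M:ℝ) ^ (γ' : ℝ) ≤ K / (K / ε) :=
            div_le_div_of_nonneg_left hK.le hKε hMγ'
        _ = ε := by field_simp
    have h2R : 2 * ((c + c₁ + 1) * (M:ℝ) ^ (-γ' : ℝ)) ≤ ε := by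
      rw [hKdef] at hKM; linarith [hKM]
    refine ⟨Y, hYC, ?_, ?_⟩
    · intro f hf
      obtain ⟨y, hyY, hfy⟩ := hYcov f hf
      simp only [Set.mem_iUnion, Metric.mem_closedBall, exists_prop]
      exact ⟨y, hyY, le_trans hfy h2R⟩
    · -- cardinality bound
      have hcard2 : (X.card : ℝ) ≤ 2 ^ (c₂ * (M:ℝ) ^ (γ' / t)) := by
        rcases Nat.eq_zero_or_pos X.card with h0 | hpos
        · rw [h0]; push_cast; positivity
        · have hcpos : (0:ℝ) < (X.card : ℝ) := by exact_mod_cast hpos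
          have : (X.card : ℝ) = 2 ^ Real.logb 2 (X.card : ℝ) :=
            (Real.rpow_logb two_pos (by norm_num) hcpos).symm
          rw [this]
          apply Real.rpow_le_rpow_of_exponent_le one_le_two
          rw [← hexp]; exact hXcard
      have hexpbound : c₂ * (M:ℝ) ^ (γ' / t) ≤ c' * ε ^ (-(1 / t)) := by
        have hAt : A ^ (γ' / t) = K ^ ((1:ℝ)/t) * ε ^ (-(1 / t)) := by
          rw [hAdef, ← Real.rpow_mul hKε.le]
          have hmul : γ'⁻¹ * (γ' / t) = 1 / t := by
            field_simp
          rw [hmul, Real.div_rpow hK.le hε0.le, Real.rpow_neg hε0.le, div_eq_mul_inv]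
        have hMle : (M:ℝ) ^ (γ' / t) ≤ 2 ^ (γ' / t) * A ^ (γ' / t) := by
          calc (M:ℝ) ^ (γ' / t) ≤ (2 * A) ^ (γ' / t) :=
                Real.rpow_le_rpow hMpos.le hM2A (by positivity)
            _ = 2 ^ (γ' / t) * A ^ (γ' / t) :=
                Real.mul_rpow (by norm_num) hApos.le
        calc c₂ * (M:ℝ) ^ (γ' / t) ≤ c₂ * (2 ^ (γ' / t) * A ^ (γ' / t)) :=
              mul_le_mul_of_nonneg_left hMle hc₂.le
          _ = c' * ε ^ (-(1 / t)) := by rw [hAt, hc'def]; ring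
      calc (Y.card : ℝ) ≤ (X.card : ℝ) := by exact_mod_cast hYcard
        _ ≤ 2 ^ (c₂ * (M:ℝ) ^ (γ' / t)) := hcard2
        _ ≤ 2 ^ (c' * ε ^ (-(1 / t))) :=
            Real.rpow_le_rpow_of_exponent_le one_le_two hexpbound
  -- conclude
  by_contra hcon
  push_neg at hcon
  obtain ⟨z, hz1, hz2⟩ := EReal.exists_between_coe_real hcon
  have hzpos : (0:ℝ) < z := by
    have : (0 : EReal) < (z : EReal) := lt_of_le_of_lt henc0 hz1
    exact_mod_cast this
  exact absurd (key z hzpos hz2) (not_le.mpr hz1)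
end
end

section
/- Let q ∈ [1,∞], sequences (d_M) ∈ ℕ^ℕ and (r_M) with r_M ≥ 1, and Σ_M = B_{d_M,q}(0,r_M) the q-norm ball of radius r_M supported on the first d_M coordinates of ℓ^q(ℕ). Let φ_M : (Σ_M, ‖·‖_q) → (𝔽,d) be Lipschitz with constants Lip(φ_M) ≥ 1. If for every h > 0, d_M (log₂ r_M + log₂ Lip(φ_M) + 1) = O(M^{1+h}), then the sequence (φ_M(Σ_M))_{M∈ℕ} is ∞-encodable in (𝔽,d). -/
open scoped ENNReal BigOperators
open Filter

noncomputable section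

open scoped NNReal

/-- The ball of radius `r` in `ℓ^q(ℕ)` consisting of sequences supported on the first `d`
coordinates. -/
def lpBall (q : ℝ≥0∞) [Fact (1 ≤ q)] (d : ℕ) (r : ℝ) : Set (lp (fun _ : ℕ => ℝ) q) :=
  {x | ‖x‖ ≤ r ∧ ∀ i : ℕ, d ≤ i → (x : ∀ _ : ℕ, ℝ) i = 0}


set_option maxHeartbeats 1000000

lemma zero_mem_lpBall (q : ℝ≥0∞) [Fact (1 ≤ q)] (d : ℕ) {r : ℝ} (hr : 0 ≤ r) :
    (0 : lp (fun _ : ℕ => ℝ) q) ∈ lpBall q d r := by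
  refine ⟨by simpa using hr, fun i _ => ?_⟩
  simp

lemma lp_norm_le_of_bounds (q : ℝ≥0∞) [Fact (1 ≤ q)] (d : ℕ) (hd : 1 ≤ d) {ε : ℝ} (hε : 0 ≤ ε)
    (z : lp (fun _ : ℕ => ℝ) q)
    (hz1 : ∀ i, i < d → |(z : ∀ _ : ℕ, ℝ) i| ≤ ε)
    (hz2 : ∀ i, d ≤ i → (z : ∀ _ : ℕ, ℝ) i = 0) :
    ‖z‖ ≤ (d : ℝ) * ε := by
  have hq : (1 : ℝ≥0∞) ≤ q := Fact.out
  have hd1 : (1 : ℝ) ≤ (d : ℝ) := by exact_mod_cast hd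
  have hdε : 0 ≤ (d : ℝ) * ε := by positivity
  rcases eq_or_ne q ∞ with rfl | hq'
  · refine lp.norm_le_of_forall_le hdε fun i => ?_
    rcases lt_or_ge i d with hi | hi
    · calc ‖(z : ∀ _ : ℕ, ℝ) i‖ ≤ ε := hz1 i hi
        _ ≤ (d : ℝ) * ε := le_mul_of_one_le_left hε hd1
    · rw [hz2 i hi]; simpa using hdε
  · have ht : 1 ≤ q.toReal := by
      simpa using ENNReal.toReal_mono hq' hq
    have ht0 : 0 < q.toReal := lt_of_lt_of_le one_pos ht
    refine lp.norm_le_of_forall_sum_le ht0 hdε fun s => ?_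
    have key : ∀ i ∈ s, i ∉ s ∩ Finset.range d → ‖(z : ∀ _ : ℕ, ℝ) i‖ ^ q.toReal = 0 := by
      intro i hi hni
      have : d ≤ i := by
        by_contra hcon
        exact hni (Finset.mem_inter.2 ⟨hi, Finset.mem_range.2 (not_le.1 hcon)⟩)
      rw [hz2 i this]
      simp [Real.zero_rpow ht0.ne']
    calc ∑ i ∈ s, ‖(z : ∀ _ : ℕ, ℝ) i‖ ^ q.toReal
        = ∑ i ∈ s ∩ Finset.range d, ‖(z : ∀ _ : ℕ, ℝ) i‖ ^ q.toReal :=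
          (Finset.sum_subset Finset.inter_subset_left key).symm
      _ ≤ ∑ i ∈ Finset.range d, ‖(z : ∀ _ : ℕ, ℝ) i‖ ^ q.toReal := by
          refine Finset.sum_le_sum_of_subset_of_nonneg Finset.inter_subset_right ?_
          intro i _ _; positivity
      _ ≤ ∑ _i ∈ Finset.range d, ε ^ q.toReal := by
          refine Finset.sum_le_sum fun i hi => ?_
          exact Real.rpow_le_rpow (norm_nonneg _) (hz1 i (Finset.mem_range.1 hi)) ht0.le
      _ = (d : ℝ) * ε ^ q.toReal := by
          rw [Finset.sum_const, Finset.card_range, nsmul_eq_mul]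
      _ ≤ ((d : ℝ) * ε) ^ q.toReal := by
          rw [Real.mul_rpow (by positivity) hε]
          refine mul_le_mul_of_nonneg_right ?_ (by positivity)
          calc (d : ℝ) = (d : ℝ) ^ (1 : ℝ) := (Real.rpow_one _).symm
            _ ≤ (d : ℝ) ^ q.toReal := Real.rpow_le_rpow_of_exponent_le hd1 ht

lemma exists_lp_net (q : ℝ≥0∞) [Fact (1 ≤ q)] (D : ℕ) (hD : 1 ≤ D) {R ε : ℝ}
    (hR : 0 ≤ R) (hε : 0 < ε) :
    ∃ T : Finset (lp (fun _ : ℕ => ℝ) q), ↑T ⊆ lpBall q D R ∧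
      (lpBall q D R ⊆ ⋃ y ∈ T, Metric.closedBall y ((D : ℝ) * ε)) ∧
      (T.card : ℝ) ≤ (2 * R / ε + 5) ^ D := by
  classical
  have hq0 : q ≠ 0 := by
    have hq : (1 : ℝ≥0∞) ≤ q := Fact.out
    exact (zero_lt_one.trans_le hq).ne'
  set n : ℕ := ⌈R / ε⌉₊ + 1 with hn
  set A := lpBall q D R with hA
  set G : lp (fun _ : ℕ => ℝ) q → (Fin D → ℤ) :=
    fun x i => round ((x : ∀ _ : ℕ, ℝ) (i : ℕ) / ε) with hGdef
  have habs : ∀ x ∈ A, ∀ i : ℕ, |(x : ∀ _ : ℕ, ℝ) i| ≤ R := by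
    intro x hx i
    calc |(x : ∀ _ : ℕ, ℝ) i| = ‖(x : ∀ _ : ℕ, ℝ) i‖ := rfl
      _ ≤ ‖x‖ := lp.norm_apply_le_norm hq0 x i
      _ ≤ R := hx.1
  set S : Finset (Fin D → ℤ) := Fintype.piFinset fun _ => Finset.Icc (-(n : ℤ)) (n : ℤ) with hS
  have hG : ∀ x ∈ A, G x ∈ S := by
    intro x hx
    rw [hS, Fintype.mem_piFinset]
    intro i
    set t : ℝ := (x : ∀ _ : ℕ, ℝ) (i : ℕ) / ε with ht
    have h1 : |t| ≤ R / ε := by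
      rw [ht, abs_div, abs_of_pos hε]
      gcongr
      exact habs x hx i
    have h2 : |(round t : ℝ)| ≤ R / ε + 1 / 2 := by
      calc |(round t : ℝ)| = |t - (t - round t)| := by ring_nf
        _ ≤ |t| + |t - round t| := by
            have := abs_sub (t) (t - round t)
            calc |t - (t - round t)| ≤ |t| + |t - (round t : ℝ)| := abs_sub _ _
              _ = |t| + |t - round t| := rfl
        _ ≤ R / ε + 1 / 2 := add_le_add h1 (abs_sub_round t)
    have h3 : |(round t : ℝ)| ≤ (n : ℝ) := by
      refine h2.trans ?_
      have : R / ε ≤ (⌈R / ε⌉₊ : ℝ) := Nat.le_ceil _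
      rw [hn]; push_cast; linarith
    have h4 : |round t| ≤ (n : ℤ) := by exact_mod_cast (by rwa [← Int.cast_abs] at h3 : ((|round t| : ℤ) : ℝ) ≤ (n : ℝ))
    rw [Finset.mem_Icc, ← abs_le]
    exact h4
  have hfiber : ∀ x ∈ A, ∀ x' ∈ A, G x = G x' → dist x x' ≤ (D : ℝ) * ε := by
    intro x hx x' hx' hGxx
    rw [dist_eq_norm]
    refine lp_norm_le_of_bounds q D hD hε.le (x - x') ?_ ?_
    · intro i hi
      have hround : round ((x : ∀ _ : ℕ, ℝ) i / ε) = round ((x' : ∀ _ : ℕ, ℝ) i / ε) :=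
        congrFun hGxx ⟨i, hi⟩
      set t : ℝ := (x : ∀ _ : ℕ, ℝ) i / ε with htdef
      set t' : ℝ := (x' : ∀ _ : ℕ, ℝ) i / ε with htdef'
      have h5 : |t - t'| ≤ 1 := by
        calc |t - t'| = |(t - round t) - (t' - (round t' : ℝ))| := by rw [hround]; ring_nf
          _ ≤ |t - round t| + |t' - (round t' : ℝ)| := abs_sub _ _
          _ ≤ 1 / 2 + 1 / 2 := add_le_add (abs_sub_round t) (abs_sub_round t')
          _ = 1 := by norm_num
      have hxy : ((x - x' : lp (fun _ : ℕ => ℝ) q) : ∀ _ : ℕ, ℝ) i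
          = (x : ∀ _ : ℕ, ℝ) i - (x' : ∀ _ : ℕ, ℝ) i := by
        simp
      rw [hxy]
      have : (x : ∀ _ : ℕ, ℝ) i - (x' : ∀ _ : ℕ, ℝ) i = ε * (t - t') := by
        rw [htdef, htdef']
        field_simp
      rw [this, abs_mul, abs_of_pos hε]
      calc ε * |t - t'| ≤ ε * 1 := by gcongr
        _ = ε := mul_one ε
    · intro i hi
      have hxy : ((x - x' : lp (fun _ : ℕ => ℝ) q) : ∀ _ : ℕ, ℝ) i
          = (x : ∀ _ : ℕ, ℝ) i - (x' : ∀ _ : ℕ, ℝ) i := by simp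
      rw [hxy, hx.2 i hi, hx'.2 i hi, sub_zero]
  set f : (Fin D → ℤ) → lp (fun _ : ℕ => ℝ) q := fun v =>
    if h : ∃ x, x ∈ A ∧ G x = v then h.choose else 0 with hf
  have hfA : ∀ v, f v ∈ A := by
    intro v
    simp only [hf]
    by_cases h : ∃ x, x ∈ A ∧ G x = v
    · rw [dif_pos h]; exact h.choose_spec.1
    · rw [dif_neg h]; exact zero_mem_lpBall q D hR
  refine ⟨S.image f, ?_, ?_, ?_⟩
  · intro y hy
    rcases Finset.mem_image.1 (by exact_mod_cast hy) with ⟨v, _, rfl⟩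
    exact hfA v
  · intro x hx
    have hex : ∃ x', x' ∈ A ∧ G x' = G x := ⟨x, hx, rfl⟩
    refine Set.mem_iUnion₂.2 ⟨f (G x), Finset.mem_coe.2 (Finset.mem_image_of_mem f (hG x hx)), ?_⟩
    rw [Metric.mem_closedBall]
    have h6 : f (G x) = hex.choose := by simp only [hf]; exact dif_pos hex
    rw [h6]
    have := hex.choose_spec
    exact hfiber x hx _ this.1 this.2.symm
  · have hcard : (S.image f).card ≤ S.card := Finset.card_image_le
    have hScard : S.card = (2 * n + 1) ^ D := by
      rw [hS, Fintype.card_piFinset]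
      have : ((n : ℤ) + 1 - -(n : ℤ)).toNat = 2 * n + 1 := by omega
      simp only [Int.card_Icc, this, Finset.prod_const, Finset.card_univ, Fintype.card_fin]
    have hbase : (2 * (n : ℝ) + 1) ≤ 2 * R / ε + 5 := by
      have h7 : (⌈R / ε⌉₊ : ℝ) < R / ε + 1 := Nat.ceil_lt_add_one (by positivity)
      have : (n : ℝ) = (⌈R / ε⌉₊ : ℝ) + 1 := by rw [hn]; push_cast; ring
      rw [this]
      have h8 : 2 * (R / ε) = 2 * R / ε := by ring
      linarith
    calc ((S.image f).card : ℝ) ≤ (S.card : ℝ) := by exact_mod_cast hcard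
      _ = ((2 * n + 1 : ℕ) : ℝ) ^ D := by rw [hScard]; push_cast; ring
      _ ≤ (2 * R / ε + 5) ^ D := by
          refine pow_le_pow_left₀ (by positivity) ?_ D
          have h7 : (⌈R / ε⌉₊ : ℝ) < R / ε + 1 := Nat.ceil_lt_add_one (by positivity)
          have h8 : 2 * R / ε = 2 * (R / ε) := by ring
          push_cast
          linarith

lemma eventually_log_le_rpow {h : ℝ} (hh : 0 < h) (C1 C2 : ℝ) :
    ∀ᶠ M : ℕ in atTop, C1 + C2 * Real.logb 2 M ≤ (M : ℝ) ^ h := by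
  have l1 : Tendsto (fun x : ℝ => C1 / x ^ h) atTop (nhds 0) :=
    Tendsto.div_atTop tendsto_const_nhds (tendsto_rpow_atTop hh)
  have l2 : Tendsto (fun x : ℝ => Real.log x / x ^ h) atTop (nhds 0) :=
    (isLittleO_log_rpow_atTop hh).tendsto_div_nhds_zero
  have l3 : Tendsto (fun x : ℝ => (C1 + C2 * Real.logb 2 x) / x ^ h) atTop (nhds 0) := by
    have := l1.add (l2.const_mul (C2 / Real.log 2))
    simp only [mul_zero, add_zero] at this
    refine this.congr fun x => ?_
    rw [Real.logb]
    ring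
  have l4 : ∀ᶠ x : ℝ in atTop, (C1 + C2 * Real.logb 2 x) / x ^ h < 1 :=
    l3.eventually_lt_const one_pos
  have l5 : ∀ᶠ x : ℝ in atTop, C1 + C2 * Real.logb 2 x ≤ x ^ h := by
    filter_upwards [l4, eventually_ge_atTop (1 : ℝ)] with x hx hx1
    have hxpos : 0 < x ^ h := Real.rpow_pos_of_pos (lt_of_lt_of_le one_pos hx1) h
    exact (div_le_one hxpos).1 hx.le
  exact tendsto_natCast_atTop_atTop.eventually l5

/-- Lipschitz images of `q`-balls are `∞`-encodable: if
`φ_M : Σ_M → F` is `Lip(φ_M)`-Lipschitz with `Lip(φ_M) ≥ 1` on the ball `Σ_M` of radius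
`r_M ≥ 1` supported on the first `d_M` coordinates, and for every `h > 0`,
`d_M (log₂ r_M + log₂ Lip(φ_M) + 1) = O(M^{1+h})`, then `(φ_M(Σ_M))_M` is `∞`-encodable. -/
theorem lipschitz_image_infty_encodable (q : ℝ≥0∞) [Fact (1 ≤ q)]
    {F : Type*} [PseudoMetricSpace F]
    (d : ℕ → ℕ) (hd : ∀ M, 1 ≤ d M) (r : ℕ → ℝ) (hr : ∀ M, 1 ≤ r M)
    (K : ℕ → ℝ≥0) (hK : ∀ M, 1 ≤ K M)
    (φ : ∀ M : ℕ, lp (fun _ : ℕ => ℝ) q → F)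
    (hφ : ∀ M, LipschitzOnWith (K M) (φ M) (lpBall q (d M) (r M)))
    (hgrowth : ∀ h : ℝ, 0 < h → ∃ c : ℝ, 0 < c ∧ ∀ᶠ M : ℕ in atTop,
      (d M : ℝ) * (Real.logb 2 (r M) + Real.logb 2 (K M) + 1) ≤ c * (M : ℝ) ^ ((1 : ℝ) + h)) :
    ∀ γ : ℝ, 0 < γ → IsEncodable (fun M => φ M '' lpBall q (d M) (r M)) γ := by
  classical
  intro γ hγ h hh
  obtain ⟨c, hc, hev⟩ := hgrowth (h / 2) (by linarith)
  set B : ℕ → ℝ := fun M =>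
    (d M : ℝ) * Real.logb 2 (7 * r M * (K M : ℝ) * (d M : ℝ) * (M : ℝ) ^ γ) with hBdef
  -- basic positivity facts
  have hfacts : ∀ M : ℕ, 1 ≤ M →
      (0:ℝ) < M ∧ (1:ℝ) ≤ (K M : ℝ) ∧ (1:ℝ) ≤ (d M : ℝ) ∧ (1:ℝ) ≤ (M:ℝ) ^ γ := by
    intro M hM
    have hM0 : (0:ℝ) < M := by exact_mod_cast hM
    refine ⟨hM0, by exact_mod_cast hK M, by exact_mod_cast hd M, ?_⟩
    exact Real.one_le_rpow (by exact_mod_cast hM) hγ.le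
  -- Step 1: per-M construction
  have step1 : ∀ M : ℕ, 1 ≤ M → ∃ X : Finset F,
      ↑X ⊆ φ M '' lpBall q (d M) (r M) ∧
      (φ M '' lpBall q (d M) (r M) ⊆ ⋃ y ∈ X, Metric.closedBall y ((M : ℝ) ^ (-γ))) ∧
      Real.logb 2 ((X.card : ℝ)) ≤ B M := by
    intro M hM
    obtain ⟨hM0, hK1, hD1, hmγ1⟩ := hfacts M hM
    have hK0 : (0:ℝ) < (K M : ℝ) := lt_of_lt_of_le one_pos hK1
    have hD0 : (0:ℝ) < (d M : ℝ) := lt_of_lt_of_le one_pos hD1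
    have hR1 : (1:ℝ) ≤ r M := hr M
    have hR0 : (0:ℝ) < r M := lt_of_lt_of_le one_pos hR1
    have hmγ0 : (0:ℝ) < (M:ℝ) ^ γ := lt_of_lt_of_le one_pos hmγ1
    have hmneg0 : (0:ℝ) < (M:ℝ) ^ (-γ) := Real.rpow_pos_of_pos hM0 _
    set ε : ℝ := (M : ℝ) ^ (-γ) / ((K M : ℝ) * (d M : ℝ)) with hεdef
    have hε : 0 < ε := by rw [hεdef]; positivity
    obtain ⟨T, hT1, hT2, hT3⟩ := exists_lp_net q (d M) (hd M) (le_trans zero_le_one hR1) hε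
    have e1 : (1:ℝ) ≤ (K M : ℝ) * (d M : ℝ) := by nlinarith
    have e2 : (1:ℝ) ≤ (K M : ℝ) * (d M : ℝ) * ((M:ℝ) ^ γ) := by nlinarith
    have e3 : (1:ℝ) ≤ r M * ((K M : ℝ) * (d M : ℝ) * ((M:ℝ) ^ γ)) := by nlinarith
    have hP1 : (1:ℝ) ≤ 7 * r M * (K M : ℝ) * (d M : ℝ) * (M : ℝ) ^ γ := by nlinarith [e3]
    refine ⟨T.image (φ M), ?_, ?_, ?_⟩
    · intro y hy
      rcases Finset.mem_image.1 (Finset.mem_coe.1 hy) with ⟨t, ht, rfl⟩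
      exact ⟨t, hT1 ht, rfl⟩
    · rintro y ⟨x, hx, rfl⟩
      rcases Set.mem_iUnion₂.1 (hT2 hx) with ⟨t, htT, hxt⟩
      have htT' : t ∈ T := by exact_mod_cast htT
      refine Set.mem_iUnion₂.2 ⟨φ M t, Finset.mem_coe.2 (Finset.mem_image_of_mem _ htT'), ?_⟩
      rw [Metric.mem_closedBall] at hxt ⊢
      have hdist := (hφ M).dist_le_mul x hx t (hT1 htT')
      calc dist (φ M x) (φ M t) ≤ (K M : ℝ) * dist x t := hdist
        _ ≤ (K M : ℝ) * ((d M : ℝ) * ε) := by gcongr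
        _ = (M : ℝ) ^ (-γ) := by rw [hεdef]; field_simp
    · have hcard : (((T.image (φ M)).card : ℕ) : ℝ) ≤
          (7 * r M * (K M : ℝ) * (d M : ℝ) * (M : ℝ) ^ γ) ^ (d M) := by
        have h1 : (((T.image (φ M)).card : ℕ) : ℝ) ≤ (T.card : ℝ) :=
          Nat.cast_le.2 Finset.card_image_le
        refine h1.trans (hT3.trans ?_)
        refine pow_le_pow_left₀ (by positivity) ?_ _
        have hεinv : 2 * r M / ε = 2 * r M * ((K M : ℝ) * (d M : ℝ) * (M : ℝ) ^ γ) := by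
          rw [hεdef, Real.rpow_neg hM0.le]
          field_simp
        rw [hεinv]
        nlinarith [e3]
      rcases Nat.eq_zero_or_pos (T.image (φ M)).card with h0 | h0
      · rw [h0]
        simp only [hBdef, Nat.cast_zero, Real.logb_zero]
        exact mul_nonneg hD0.le (Real.logb_nonneg one_lt_two hP1)
      · have hpos : (0:ℝ) < ((T.image (φ M)).card : ℝ) := by exact_mod_cast h0
        calc Real.logb 2 (((T.image (φ M)).card : ℕ) : ℝ)
            ≤ Real.logb 2 ((7 * r M * (K M : ℝ) * (d M : ℝ) * (M : ℝ) ^ γ) ^ (d M)) :=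
              Real.logb_le_logb_of_le one_lt_two hpos hcard
          _ = (d M : ℝ) * Real.logb 2 (7 * r M * (K M : ℝ) * (d M : ℝ) * (M : ℝ) ^ γ) := by
              rw [Real.logb_pow]
          _ = B M := by simp only [hBdef]
  -- Step 2: eventual bound on B
  have step2 : ∀ᶠ M : ℕ in atTop, B M ≤ c * (M : ℝ) ^ ((1 : ℝ) + h) := by
    have hl7 : Real.logb 2 7 ≤ 3 := by
      rw [Real.logb_le_iff_le_rpow one_lt_two (by norm_num)]
      rw [show (3:ℝ) = ((3:ℕ):ℝ) by norm_num, Real.rpow_natCast]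
      norm_num
    filter_upwards [hev, eventually_log_le_rpow (half_pos hh) (3 + Real.logb 2 c)
      (1 + h / 2 + γ), eventually_ge_atTop 1] with M hevM hlogM hM
    obtain ⟨hM0, hK1, hD1, hmγ1⟩ := hfacts M hM
    have hK0 : (0:ℝ) < (K M : ℝ) := lt_of_lt_of_le one_pos hK1
    have hD0 : (0:ℝ) < (d M : ℝ) := lt_of_lt_of_le one_pos hD1
    have hR1 : (1:ℝ) ≤ r M := hr M
    have hR0 : (0:ℝ) < r M := lt_of_lt_of_le one_pos hR1
    have hmγ0 : (0:ℝ) < (M:ℝ) ^ γ := lt_of_lt_of_le one_pos hmγ1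
    set lR := Real.logb 2 (r M) with hlR
    set lK := Real.logb 2 ((K M : ℝ)) with hlK
    set lD := Real.logb 2 ((d M : ℝ)) with hlD0
    set lM := Real.logb 2 (M : ℝ) with hlM0
    have hlRpos : 0 ≤ lR := Real.logb_nonneg one_lt_two hR1
    have hlKpos : 0 ≤ lK := Real.logb_nonneg one_lt_two hK1
    have hlDpos : 0 ≤ lD := Real.logb_nonneg one_lt_two hD1
    have hlMpos : 0 ≤ lM := Real.logb_nonneg one_lt_two (by exact_mod_cast hM)
    have hsplit : Real.logb 2 (7 * r M * (K M : ℝ) * (d M : ℝ) * (M : ℝ) ^ γ)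
        = Real.logb 2 7 + lR + lK + lD + γ * lM := by
      rw [Real.logb_mul (by positivity) (ne_of_gt hmγ0),
          Real.logb_mul (by positivity) (ne_of_gt hD0),
          Real.logb_mul (by positivity) (ne_of_gt hK0),
          Real.logb_mul (by norm_num) (ne_of_gt hR0),
          Real.logb_rpow_eq_mul_logb_of_pos hM0]
    set aM := (d M : ℝ) * (lR + lK + 1) with haM
    have hDa : (d M : ℝ) ≤ aM := by nlinarith
    have haM0 : (0:ℝ) < aM := lt_of_lt_of_le hD0 hDa
    have hrp : (0:ℝ) < c * (M : ℝ) ^ ((1:ℝ) + h / 2) := by positivity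
    have hlDle : lD ≤ Real.logb 2 c + (1 + h / 2) * lM := by
      calc lD ≤ Real.logb 2 aM := Real.logb_le_logb_of_le one_lt_two hD0 hDa
        _ ≤ Real.logb 2 (c * (M : ℝ) ^ ((1:ℝ) + h / 2)) :=
            Real.logb_le_logb_of_le one_lt_two haM0 hevM
        _ = Real.logb 2 c + (1 + h / 2) * lM := by
            rw [Real.logb_mul (ne_of_gt hc) (ne_of_gt (Real.rpow_pos_of_pos hM0 _)),
                Real.logb_rpow_eq_mul_logb_of_pos hM0]
    have hfac : (0:ℝ) ≤ 2 + lD + γ * lM := by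
      have := mul_nonneg hγ.le hlMpos
      linarith
    have e4 : B M ≤ aM + (d M : ℝ) * (2 + lD + γ * lM) := by
      simp only [hBdef]
      rw [hsplit]
      linarith [mul_le_mul_of_nonneg_left hl7 hD0.le, haM]
    have e5 : (d M : ℝ) * (2 + lD + γ * lM) ≤ aM * (2 + lD + γ * lM) :=
      mul_le_mul_of_nonneg_right hDa hfac
    have e7 : 3 + lD + γ * lM ≤ (M : ℝ) ^ (h / 2) := by linarith [hlogM, hlDle]
    have e8 : B M ≤ aM * (3 + lD + γ * lM) := by nlinarith [e4, e5, haM]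
    have e9 : aM * (3 + lD + γ * lM) ≤ (c * (M : ℝ) ^ ((1:ℝ) + h / 2)) * ((M : ℝ) ^ (h / 2)) := by
      refine mul_le_mul hevM e7 (by linarith) hrp.le
    have e10 : (c * (M : ℝ) ^ ((1:ℝ) + h / 2)) * ((M : ℝ) ^ (h / 2))
        = c * (M : ℝ) ^ ((1:ℝ) + h) := by
      rw [mul_assoc, ← Real.rpow_add hM0, show (1:ℝ) + h / 2 + h / 2 = 1 + h by ring]
    linarith [e8, e9, e10.le, e10.ge]
  -- Step 3: assemble
  obtain ⟨N, hN⟩ := eventually_atTop.1 step2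
  have hsum0 : (0:ℝ) ≤ ∑ m ∈ Finset.range N, max 0 (B m) :=
    Finset.sum_nonneg fun i _ => le_max_left 0 (B i)
  refine ⟨1, one_pos, c + ∑ m ∈ Finset.range N, max 0 (B m), by positivity, ?_⟩
  intro M hM
  obtain ⟨X, hX1, hX2, hX3⟩ := step1 M hM
  have hM0 : (0:ℝ) < M := by exact_mod_cast hM
  have hrpow1 : (1:ℝ) ≤ (M : ℝ) ^ ((1:ℝ) + h) :=
    Real.one_le_rpow (by exact_mod_cast hM) (by linarith)
  refine ⟨X, hX1, by simpa using hX2, ?_⟩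
  rcases le_or_gt N M with hNM | hNM
  · have hB := hN M hNM
    have hle : c ≤ c + ∑ m ∈ Finset.range N, max 0 (B m) := by linarith
    calc Real.logb 2 (X.card : ℝ) ≤ B M := hX3
      _ ≤ c * (M : ℝ) ^ ((1:ℝ) + h) := hB
      _ ≤ (c + ∑ m ∈ Finset.range N, max 0 (B m)) * (M : ℝ) ^ ((1:ℝ) + h) := by
          refine mul_le_mul_of_nonneg_right hle (by positivity)
  · have h2 : B M ≤ ∑ m ∈ Finset.range N, max 0 (B m) :=
      le_trans (le_max_right 0 (B M))
        (Finset.single_le_sum (fun i _ => le_max_left 0 (B i)) (Finset.mem_range.2 hNM))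
    calc Real.logb 2 (X.card : ℝ) ≤ B M := hX3
      _ ≤ c + ∑ m ∈ Finset.range N, max 0 (B m) := by linarith
      _ ≤ (c + ∑ m ∈ Finset.range N, max 0 (B m)) * (M : ℝ) ^ ((1:ℝ) + h) := by
          nlinarith [hrpow1, hsum0, hc]
end
end

section
/- Let 𝔽 be a Banach space with a basis (e_i)_{i∈ℕ} with sup_i ‖e_i‖ < ∞ satisfying the p-Telmyakov property for some p ∈ (0,∞): there is c > 0 such that for every finite I ⊆ ℕ and coefficients (c_i)_{i∈I}, (1/c)|I|^{1/p} min_{i∈I}|c_i| ≤ ‖Σ_{i∈I} c_i e_i‖ ≤ c|I|^{1/p} max_{i∈I}|c_i|. Fix 0 < q < p and let Σ^q_M be the set of f = Σ_{i=1}^M c_i e_i with (c_i) in the closed unit ball of weak-ℓ^q, i.e., sup_{λ>0} λ |{i : |c_i| ≥ λ}|^{1/q} ≤ 1. Then with s = 1/q − 1/p, the sequence (Σ^q_M)_{M∈ℕ} is s-encodable in 𝔽. -/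
open scoped ENNReal BigOperators
open Filter

noncomputable section

/-- Sign-symmetric floor quantization. -/
def qfl (lam x : ℝ) : ℝ :=
  (if 0 ≤ x then 1 else -1) * ((⌊|x| / lam⌋ : ℤ) * lam)

lemma qfl_floor_nonneg (lam x : ℝ) (hl : 0 < lam) : (0 : ℤ) ≤ ⌊|x| / lam⌋ :=
  Int.floor_nonneg.2 (by positivity)

lemma qfl_abs_le (lam x : ℝ) (hl : 0 < lam) : |qfl lam x| ≤ |x| := by
  have hf0 : (0:ℤ) ≤ ⌊|x| / lam⌋ := qfl_floor_nonneg lam x hl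
  have hf0' : (0:ℝ) ≤ (⌊|x| / lam⌋ : ℝ) := by exact_mod_cast hf0
  have habs : |qfl lam x| = (⌊|x| / lam⌋ : ℝ) * lam := by
    unfold qfl
    rcases le_or_gt 0 x with hx | hx
    · rw [if_pos hx, one_mul, abs_of_nonneg (mul_nonneg hf0' hl.le)]
    · rw [if_neg (not_le.2 hx), neg_one_mul, abs_neg,
        abs_of_nonneg (mul_nonneg hf0' hl.le)]
  rw [habs]
  calc (⌊|x| / lam⌋ : ℝ) * lam ≤ (|x| / lam) * lam :=
        mul_le_mul_of_nonneg_right (Int.floor_le _) hl.le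
    _ = |x| := div_mul_cancel₀ _ hl.ne'

lemma qfl_err (lam x : ℝ) (hl : 0 < lam) : |x - qfl lam x| ≤ lam := by
  have h1 : (⌊|x| / lam⌋ : ℝ) * lam ≤ |x| :=
    (le_div_iff₀ hl).1 (Int.floor_le _)
  have h2 : |x| < (⌊|x| / lam⌋ : ℝ) * lam + lam := by
    have := Int.lt_floor_add_one (|x| / lam)
    have := (div_lt_iff₀ hl).1 this
    nlinarith
  unfold qfl
  rcases le_or_gt 0 x with hx | hx
  · rw [if_pos hx, one_mul, abs_of_nonneg hx]
    rw [abs_of_nonneg hx] at h1 h2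
    rw [abs_le]
    constructor <;> linarith
  · rw [if_neg (not_le.2 hx), neg_one_mul, abs_of_neg hx]
    rw [abs_of_neg hx] at h1 h2
    rw [abs_le]
    constructor <;> linarith

lemma qfl_repr (lam x : ℝ) (hl : 0 < lam) :
    ∃ j : ℤ, qfl lam x = (j : ℝ) * lam ∧ |j| = ⌊|x| / lam⌋ := by
  have hf0 : (0:ℤ) ≤ ⌊|x| / lam⌋ := qfl_floor_nonneg lam x hl
  rcases le_or_gt 0 x with hx | hx
  · exact ⟨⌊|x| / lam⌋, by rw [qfl, if_pos hx, one_mul], abs_of_nonneg hf0⟩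
  · refine ⟨-⌊|x| / lam⌋, ?_, by rw [abs_neg, abs_of_nonneg hf0]⟩
    rw [qfl, if_neg (not_le.2 hx)]
    push_cast
    ring


/-- In a Banach space with a bounded basis `(e_i)` satisfying the
`p`-Telmyakov property, for `0 < q < p` the sets `Σ^q_M` of `M`-term linear combinations
with coefficients in the closed unit ball of weak-`ℓ^q` form an `s`-encodable sequence with
`s = 1/q − 1/p`. -/
theorem telmyakov_weak_lq_encodable {F : Type*} [NormedAddCommGroup F] [NormedSpace ℝ F]
    [CompleteSpace F] (e : ℕ → F) (B : ℝ) (hB : ∀ i, ‖e i‖ ≤ B)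
    (p : ℝ) (hp : 0 < p) (c : ℝ) (hc : 0 < c)
    (htel_lower : ∀ (I : Finset ℕ) (co : ℕ → ℝ) (m : ℝ), (∀ i ∈ I, m ≤ |co i|) →
      (1 / c) * (I.card : ℝ) ^ (1 / p) * m ≤ ‖∑ i ∈ I, co i • e i‖)
    (htel_upper : ∀ (I : Finset ℕ) (co : ℕ → ℝ) (t : ℝ), (∀ i ∈ I, |co i| ≤ t) →
      ‖∑ i ∈ I, co i • e i‖ ≤ c * (I.card : ℝ) ^ (1 / p) * t)
    (qq : ℝ) (hqq : 0 < qq) (hqp : qq < p) :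
    IsEncodable
      (fun M : ℕ =>
        {f : F | ∃ co : ℕ → ℝ,
          (∀ lam : ℝ, 0 < lam →
            lam * (((Finset.range M).filter (fun i => lam ≤ |co i|)).card : ℝ) ^ (1 / qq) ≤ 1) ∧
          f = ∑ i ∈ Finset.range M, co i • e i})
      (1 / qq - 1 / p) := by
  classical
  intro h hh
  have hlog2 : (0:ℝ) < Real.log 2 := Real.log_pos one_lt_two
  have hlogb3 : (0:ℝ) < Real.logb 2 3 := Real.logb_pos one_lt_two (by norm_num)
  have hc2pos : (0:ℝ) < Real.logb 2 3 + 1/(qq*h*Real.log 2) :=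
    add_pos hlogb3 (by positivity)
  refine ⟨c, hc, Real.logb 2 3 + 1/(qq*h*Real.log 2), hc2pos, ?_⟩
  intro M hM
  have hM1 : (1:ℝ) ≤ (M:ℝ) := by exact_mod_cast hM
  have hM0 : (0:ℝ) < (M:ℝ) := lt_of_lt_of_le one_pos hM1
  set A : ℝ := (M:ℝ) ^ ((1:ℝ)/qq) with hA
  have hA1 : 1 ≤ A := Real.one_le_rpow hM1 (by positivity)
  have hA0 : 0 < A := lt_of_lt_of_le one_pos hA1
  set lam : ℝ := A⁻¹ with hlam
  have hlampos : 0 < lam := by positivity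
  have hlameq : (M:ℝ) ^ (-((1:ℝ)/qq)) = lam := by
    rw [Real.rpow_neg hM0.le, hlam, hA]
  set K : ℤ := ⌊A⌋ with hK
  have hK1 : (1:ℤ) ≤ K := Int.le_floor.2 (by exact_mod_cast hA1)
  have hKA : (K:ℝ) ≤ A := Int.floor_le A
  set T : Finset ℝ := (Finset.Icc (-K) K).image (fun j : ℤ => (j:ℝ) * lam) with hT
  set G : Finset (Fin M → ℝ) := Fintype.piFinset (fun _ : Fin M => T) with hG
  set Y : Finset F := G.image (fun g : Fin M → ℝ => ∑ i, g i • e i) with hY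
  set SM : Set F := {f : F | ∃ co : ℕ → ℝ,
      (∀ lam : ℝ, 0 < lam →
        lam * (((Finset.range M).filter (fun i => lam ≤ |co i|)).card : ℝ) ^ (1 / qq) ≤ 1) ∧
      f = ∑ i ∈ Finset.range M, co i • e i} with hSM
  set X : Finset F := Y.filter (fun y => y ∈ SM) with hX
  refine ⟨X, ?_, ?_, ?_⟩
  · intro y hy
    exact (Finset.mem_filter.1 hy).2
  · -- covering
    intro f hf
    obtain ⟨co, hco, rfl⟩ := hf
    have hco1 : ∀ i ∈ Finset.range M, |co i| ≤ 1 := by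
      intro i hi
      by_contra hgt
      push_neg at hgt
      have hpos : 0 < |co i| := lt_trans one_pos hgt
      have hb := hco (|co i|) hpos
      have hmem : i ∈ (Finset.range M).filter (fun j => |co i| ≤ |co j|) :=
        Finset.mem_filter.2 ⟨hi, le_refl _⟩
      have hcard : 1 ≤ ((Finset.range M).filter (fun j => |co i| ≤ |co j|)).card :=
        Finset.card_pos.2 ⟨i, hmem⟩
      have hcard' : (1:ℝ) ≤ (((Finset.range M).filter (fun j => |co i| ≤ |co j|)).card : ℝ) := by
        exact_mod_cast hcard
      have hrp : (1:ℝ) ≤ (((Finset.range M).filter (fun j => |co i| ≤ |co j|)).card : ℝ) ^ ((1:ℝ)/qq) :=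
        Real.one_le_rpow hcard' (by positivity)
      nlinarith
    set co' : ℕ → ℝ := fun k => qfl lam (co k) with hco'
    set y : F := ∑ i ∈ Finset.range M, co' i • e i with hy
    have habs_le : ∀ k, |co' k| ≤ |co k| := fun k => qfl_abs_le lam (co k) hlampos
    -- y is in SM
    have hySM : y ∈ SM := by
      refine ⟨co', ?_, rfl⟩
      intro t ht
      have hsub : (Finset.range M).filter (fun i => t ≤ |co' i|) ⊆
          (Finset.range M).filter (fun i => t ≤ |co i|) := by
        intro i hi
        rw [Finset.mem_filter] at hi ⊢
        exact ⟨hi.1, le_trans hi.2 (habs_le i)⟩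
      have hcardle := Finset.card_le_card hsub
      have hrp : (((Finset.range M).filter (fun i => t ≤ |co' i|)).card : ℝ) ^ ((1:ℝ)/qq) ≤
          (((Finset.range M).filter (fun i => t ≤ |co i|)).card : ℝ) ^ ((1:ℝ)/qq) :=
        Real.rpow_le_rpow (by positivity) (by exact_mod_cast hcardle) (by positivity)
      calc t * (((Finset.range M).filter (fun i => t ≤ |co' i|)).card : ℝ) ^ (1/qq)
          ≤ t * (((Finset.range M).filter (fun i => t ≤ |co i|)).card : ℝ) ^ (1/qq) :=
            mul_le_mul_of_nonneg_left hrp ht.le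
        _ ≤ 1 := hco t ht
    -- y is in Y
    have hyY : y ∈ Y := by
      rw [hY, Finset.mem_image]
      refine ⟨fun i : Fin M => co' i, ?_, ?_⟩
      · rw [Fintype.mem_piFinset]
        intro i
        obtain ⟨j, hj, hjabs⟩ := qfl_repr lam (co i) hlampos
        rw [hT, Finset.mem_image]
        refine ⟨j, ?_, hj.symm⟩
        have hfl : ⌊|co (i:ℕ)| / lam⌋ ≤ K := by
          rw [hK]
          apply Int.floor_le_floor
          have h1 : |co (i:ℕ)| ≤ 1 := hco1 i (Finset.mem_range.2 i.2)
          have : |co (i:ℕ)| / lam ≤ 1 / lam := by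
            gcongr
          calc |co (i:ℕ)| / lam ≤ 1 / lam := this
            _ = A := by rw [hlam, one_div, inv_inv]
        have hjK : |j| ≤ K := by rw [hjabs]; exact hfl
        rw [Finset.mem_Icc]
        exact abs_le.1 hjK
      · rw [hy]
        exact Fin.sum_univ_eq_sum_range (fun k => co' k • e k) M
    have hyX : y ∈ X := Finset.mem_filter.2 ⟨hyY, hySM⟩
    -- distance bound
    have hdist : dist (∑ i ∈ Finset.range M, co i • e i) y ≤
        c * (M:ℝ) ^ (-(1/qq - 1/p)) := by
      rw [dist_eq_norm, hy, ← Finset.sum_sub_distrib]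
      have hsum : ∀ i ∈ Finset.range M, co i • e i - co' i • e i = (co i - co' i) • e i := by
        intro i _
        rw [sub_smul]
      rw [Finset.sum_congr rfl hsum]
      have herr : ∀ i ∈ Finset.range M, |co i - co' i| ≤ lam := fun i _ =>
        qfl_err lam (co i) hlampos
      have := htel_upper (Finset.range M) (fun i => co i - co' i) lam herr
      calc ‖∑ i ∈ Finset.range M, (co i - co' i) • e i‖
          ≤ c * ((Finset.range M).card : ℝ) ^ (1/p) * lam := this
        _ = c * (M:ℝ) ^ (-(1/qq - 1/p)) := by
            rw [Finset.card_range, ← hlameq, mul_assoc, ← Real.rpow_add hM0]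
            congr 1
            ring_nf
    refine Set.mem_biUnion hyX ?_
    exact Metric.mem_closedBall.2 hdist
  · -- cardinality bound
    have hXY : X.card ≤ Y.card := Finset.card_filter_le _ _
    have hYG : Y.card ≤ G.card := Finset.card_image_le
    have hGcard : G.card = T.card ^ M := by
      rw [hG, Fintype.card_piFinset]
      simp
    have hXle : X.card ≤ T.card ^ M := by
      calc X.card ≤ Y.card := hXY
        _ ≤ G.card := hYG
        _ = T.card ^ M := hGcard
    have hT0 : (0:ℝ) ∈ T := by
      rw [hT, Finset.mem_image]
      exact ⟨0, Finset.mem_Icc.2 ⟨by omega, by omega⟩, by simp⟩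
    have hT1 : 1 ≤ T.card := Finset.card_pos.2 ⟨0, hT0⟩
    have hTle : (T.card : ℝ) ≤ 3 * A := by
      have h1 : T.card ≤ (Finset.Icc (-K) K).card := Finset.card_image_le
      have h2 : (Finset.Icc (-K) K).card = (K + 1 - -K).toNat := Int.card_Icc _ _
      have h4 : ((Finset.Icc (-K) K).card : ℤ) = 2*K+1 := by
        rw [h2, Int.toNat_of_nonneg (by omega : (0:ℤ) ≤ K + 1 - -K)]
        ring
      calc (T.card : ℝ) ≤ ((Finset.Icc (-K) K).card : ℝ) := by exact_mod_cast h1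
        _ = 2*(K:ℝ) + 1 := by exact_mod_cast h4
        _ ≤ 2*A + 1 := by linarith
        _ ≤ 3*A := by linarith
    -- log bound
    rcases Nat.eq_zero_or_pos X.card with hN | hN
    · rw [hN]
      norm_num [Real.logb]
      positivity
    · have hN1 : (1:ℝ) ≤ (X.card : ℝ) := by exact_mod_cast hN
      have hT1' : (1:ℝ) ≤ (T.card : ℝ) := by exact_mod_cast hT1
      have hMh1 : (1:ℝ) ≤ (M:ℝ)^h := Real.one_le_rpow hM1 hh.le
      have hlogM : Real.log (M:ℝ) ≤ (M:ℝ)^h / h := by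
        have h1 : Real.log ((M:ℝ)^h) ≤ (M:ℝ)^h - 1 :=
          Real.log_le_sub_one_of_pos (by positivity)
        rw [Real.log_rpow hM0] at h1
        rw [le_div_iff₀ hh]
        nlinarith
      have step1 : Real.logb 2 (X.card : ℝ) ≤ Real.logb 2 ((T.card : ℝ) ^ M) := by
        apply (Real.logb_le_logb one_lt_two (by linarith) (pow_pos (by linarith : (0:ℝ) < (T.card:ℝ)) M)).2
        calc (X.card : ℝ) ≤ ((T.card ^ M : ℕ) : ℝ) := by exact_mod_cast hXle
          _ = (T.card : ℝ) ^ M := by push_cast; ring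
      have step2 : Real.logb 2 ((T.card : ℝ) ^ M) = (M:ℝ) * Real.logb 2 (T.card : ℝ) :=
        Real.logb_pow 2 _ M
      have step3 : Real.logb 2 (T.card : ℝ) ≤ Real.logb 2 (3 * A) :=
        (Real.logb_le_logb one_lt_two (by linarith) (by positivity)).2 hTle
      have step4 : Real.logb 2 (3 * A) = Real.logb 2 3 + (1/qq) * Real.log (M:ℝ) / Real.log 2 := by
        rw [Real.logb_mul (by norm_num) (by positivity)]
        have hAlog : Real.logb 2 A = (1/qq) * Real.log (M:ℝ) / Real.log 2 := by
          rw [Real.logb, hA, Real.log_rpow hM0]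
        rw [hAlog]
      have hMsplit : (M:ℝ) ^ ((1:ℝ) + h) = (M:ℝ) * (M:ℝ)^h := by
        rw [Real.rpow_add hM0, Real.rpow_one]
      have key : (M:ℝ) * (Real.logb 2 3 + (1/qq) * Real.log (M:ℝ) / Real.log 2) ≤
          (Real.logb 2 3 + 1/(qq*h*Real.log 2)) * ((M:ℝ) * (M:ℝ)^h) := by
        have e1 : (1/qq) * Real.log (M:ℝ) / Real.log 2 ≤ 1/(qq*h*Real.log 2) * (M:ℝ)^h := by
          calc (1/qq) * Real.log (M:ℝ) / Real.log 2
              = Real.log (M:ℝ) / (qq * Real.log 2) := by ring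
            _ ≤ ((M:ℝ)^h/h) / (qq * Real.log 2) := by
                apply div_le_div_of_nonneg_right hlogM
                positivity
            _ = 1/(qq*h*Real.log 2) * (M:ℝ)^h := by
                have e : (1:ℝ)/(qq*h*Real.log 2) = (1/h)/(qq*Real.log 2) := by
                  field_simp
                rw [e]
                ring
        have e2 : Real.logb 2 3 ≤ Real.logb 2 3 * (M:ℝ)^h := by
          calc Real.logb 2 3 = Real.logb 2 3 * 1 := by ring
            _ ≤ Real.logb 2 3 * (M:ℝ)^h := mul_le_mul_of_nonneg_left hMh1 hlogb3.le
        have : Real.logb 2 3 + (1/qq) * Real.log (M:ℝ) / Real.log 2 ≤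
            (Real.logb 2 3 + 1/(qq*h*Real.log 2)) * (M:ℝ)^h := by
          rw [add_mul]
          exact add_le_add e2 e1
        calc (M:ℝ) * (Real.logb 2 3 + (1/qq) * Real.log (M:ℝ) / Real.log 2)
            ≤ (M:ℝ) * ((Real.logb 2 3 + 1/(qq*h*Real.log 2)) * (M:ℝ)^h) :=
              mul_le_mul_of_nonneg_left this hM0.le
          _ = (Real.logb 2 3 + 1/(qq*h*Real.log 2)) * ((M:ℝ) * (M:ℝ)^h) := by ring
      calc Real.logb 2 (X.card : ℝ) ≤ (M:ℝ) * Real.logb 2 (T.card : ℝ) := by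
            rw [← step2]; exact step1
        _ ≤ (M:ℝ) * (Real.logb 2 3 + (1/qq) * Real.log (M:ℝ) / Real.log 2) := by
            rw [← step4]
            exact mul_le_mul_of_nonneg_left step3 hM0.le
        _ ≤ (Real.logb 2 3 + 1/(qq*h*Real.log 2)) * ((M:ℝ) * (M:ℝ)^h) := key
        _ = (Real.logb 2 3 + 1/(qq*h*Real.log 2)) * (M:ℝ) ^ ((1:ℝ)+h) := by
            rw [hMsplit]
end
end

section
/- Let 𝔽 be a Hilbert space, D = (φ_i)_{i∈ℕ} a dictionary, and π : ℕ → ℕ of at most polynomial growth. For each finite I ⊆ ℕ let (φ̃^I_i)_{i∈I} be an orthonormalization of (φ_i)_{i∈I}. For M ∈ ℕ and c > 0 define Σ̃^{π,c}_M = { Σ_{i∈I} c̃_i φ̃^I_i : I ⊆ {1,…,π(M)}, |I| ≤ M, c̃_i ∈ [−c,c] }. Then the sequence (Σ̃^{π,c}_M)_{M∈ℕ} is ∞-encodable in 𝔽. -/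
/-!
For a fixed support `I`, orthonormality makes the synthesis map `x ↦ ∑ xᵢ φ̃ᵢ` an isometry from
`ℓ²(I)`, so a uniform grid of mesh `2c/K` on the coefficient cube `[-c, c]^I` yields a
`√M · 2c/K`-net of its image with at most `(K + 1)^M` points. There are at most
`(M + 1)(π(M) + 1)^M` supports, so choosing `K = M^(⌈γ⌉ + 1)` gives a net of radius `O(M^(-γ))`
whose log-cardinality is `O(M log M) = O(M^(1+h))`.
-/

open scoped ENNReal BigOperators
open Filter

noncomputable section

open Metric Finset

theorem exists_uniform_grid_abs_le {c : ℝ} (hc : 0 < c) {K : ℕ} (hK : 0 < K) :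
    ∃ G : Finset ℝ, G.card ≤ K + 1 ∧ (∀ y ∈ G, |y| ≤ c) ∧
      ∀ x, |x| ≤ c → ∃ y ∈ G, |x - y| ≤ 2 * c / K := by
  set δ := 2 * c / K with hδ
  have hδ₀ : 0 < δ := by positivity
  refine ⟨(range (K + 1)).image fun j : ℕ => -c + δ * j, card_image_le.trans (card_range _).le,
    ?_, fun x hx => ?_⟩
  · simp only [mem_image, mem_range, forall_exists_index, and_imp]
    rintro _ j hj rfl
    have hjK : δ * j ≤ 2 * c := by
      rw [hδ, div_mul_eq_mul_div, div_le_iff₀ (by positivity)]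
      gcongr
      exact_mod_cast Nat.lt_succ_iff.mp hj
    exact abs_le.mpr ⟨by nlinarith, by linarith⟩
  · obtain ⟨hx₁, hx₂⟩ := abs_le.mp hx
    set t := (x + c) / δ
    have ht₀ : 0 ≤ t := div_nonneg (by linarith) hδ₀.le
    have htK : t ≤ K := by
      rw [div_le_iff₀ hδ₀, hδ]; field_simp; linarith
    have hfloor : ⌊t⌋₊ ∈ range (K + 1) :=
      mem_range.mpr (Nat.lt_succ_of_le (Nat.floor_le_of_le htK))
    refine ⟨-c + δ * ⌊t⌋₊, mem_image_of_mem _ hfloor, ?_⟩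
    have hfrac : |t - ⌊t⌋₊| ≤ 1 :=
      abs_le.mpr ⟨by linarith [Nat.floor_le ht₀], by linarith [Nat.lt_floor_add_one t]⟩
    calc |x - (-c + δ * ⌊t⌋₊)| = δ * |t - ⌊t⌋₊| := by
          rw [← abs_of_pos hδ₀, ← abs_mul, abs_of_pos hδ₀]
          congr 1
          simp only [t]
          field_simp
          ring
      _ ≤ δ := mul_le_of_le_one_right hδ₀.le hfrac

theorem EuclideanSpace.dist_le_sqrt_card_mul {ι : Type*} [Fintype ι] {x y : EuclideanSpace ℝ ι}
    {δ : ℝ} (hδ : 0 ≤ δ) (h : ∀ i, dist (x i) (y i) ≤ δ) :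
    dist x y ≤ √(Fintype.card ι) * δ := by
  rw [EuclideanSpace.dist_eq, ← Real.sqrt_sq hδ, ← Real.sqrt_mul (Nat.cast_nonneg _)]
  gcongr
  calc ∑ i, dist (x i) (y i) ^ 2 ≤ ∑ _i : ι, δ ^ 2 := by gcongr with i; exact h i
    _ = _ := by simp

theorem Orthonormal.norm_sum_smul {𝕜 ι E : Type*} [RCLike 𝕜] [NormedAddCommGroup E]
    [InnerProductSpace 𝕜 E] [Fintype ι] {v : ι → E} (hv : Orthonormal 𝕜 v) (a : ι → 𝕜) :
    ‖∑ i, a i • v i‖ = √(∑ i, ‖a i‖ ^ 2) := by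
  rw [eq_comm, Real.sqrt_eq_iff_eq_sq (by positivity) (norm_nonneg _),
    ← inner_self_eq_norm_sq (𝕜 := 𝕜), hv.inner_sum]
  simp [RCLike.conj_mul]

theorem Orthonormal.isometry_sum_smul {𝕜 ι E : Type*} [RCLike 𝕜] [NormedAddCommGroup E]
    [InnerProductSpace 𝕜 E] [Fintype ι] {v : ι → E} (hv : Orthonormal 𝕜 v) :
    Isometry fun x : EuclideanSpace 𝕜 ι => ∑ i, x i • v i := by
  refine Isometry.of_dist_eq fun x y => ?_
  rw [dist_eq_norm, ← sum_sub_distrib, EuclideanSpace.dist_eq]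
  simp_rw [← sub_smul, hv.norm_sum_smul, dist_eq_norm]

def coeffBox (ι : Type*) (c : ℝ) : Set (EuclideanSpace ℝ ι) := {x | ∀ i, |x i| ≤ c}

theorem exists_finset_isCover_coeffBox (ι : Type*) [Fintype ι] {c : ℝ} (hc : 0 < c) {K : ℕ}
    (hK : 0 < K) :
    ∃ X : Finset (EuclideanSpace ℝ ι), X.card ≤ (K + 1) ^ Fintype.card ι ∧
      ↑X ⊆ coeffBox ι c ∧
      IsCover (√(Fintype.card ι) * (2 * c / K)).toNNReal (coeffBox ι c) X := by
  classical
  obtain ⟨G, hGcard, hGbox, hGnet⟩ := exists_uniform_grid_abs_le hc hK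
  refine ⟨(Fintype.piFinset fun _ : ι => G).image (WithLp.toLp 2), ?_, ?_, ?_⟩
  · calc _ ≤ (Fintype.piFinset fun _ : ι => G).card := card_image_le
      _ ≤ (K + 1) ^ Fintype.card ι := by
        rw [Fintype.card_piFinset, prod_const, card_univ]; gcongr
  · simp only [coe_image, Set.image_subset_iff]
    intro y hy i
    exact hGbox _ (Fintype.mem_piFinset.mp hy i)
  · intro x hx
    choose y hyG hxy using fun i => hGnet (x i) (hx i)
    refine ⟨WithLp.toLp 2 y, mem_image_of_mem _ (Fintype.mem_piFinset.mpr hyG), ?_⟩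
    show edist x _ ≤ ENNReal.ofReal _
    rw [edist_le_ofReal (by positivity)]
    exact EuclideanSpace.dist_le_sqrt_card_mul (by positivity) hxy

theorem Metric.IsCover.biUnion {α X : Type*} [PseudoEMetricSpace X] {ε : NNReal} {t : Set α}
    {s N : α → Set X} (h : ∀ a ∈ t, IsCover ε (s a) (N a)) :
    IsCover ε (⋃ a ∈ t, s a) (⋃ a ∈ t, N a) := by
  intro x hx
  obtain ⟨a, ha, hxa⟩ := Set.mem_iUnion₂.mp hx
  obtain ⟨y, hy, hxy⟩ := h a ha hxa
  exact ⟨y, Set.mem_biUnion ha hy, hxy⟩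

theorem card_powerset_filter_card_le {α : Type*} (s : Finset α) (M : ℕ) :
    (s.powerset.filter (·.card ≤ M)).card ≤ (M + 1) * (s.card + 1) ^ M := by
  classical
  calc _ ≤ ((range (M + 1)).biUnion fun j => s.powersetCard j).card := by
        refine card_le_card fun t ht => ?_
        rw [mem_filter, mem_powerset] at ht
        exact mem_biUnion.mpr ⟨t.card, mem_range.mpr (Nat.lt_succ_of_le ht.2),
          mem_powersetCard.mpr ⟨ht.1, rfl⟩⟩
    _ ≤ ∑ j ∈ range (M + 1), (s.powersetCard j).card := card_biUnion_le
    _ ≤ ∑ _j ∈ range (M + 1), (s.card + 1) ^ M := by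
        refine sum_le_sum fun j hj => ?_
        rw [card_powersetCard]
        calc s.card.choose j ≤ s.card ^ j := Nat.choose_le_pow _ _
          _ ≤ (s.card + 1) ^ j := Nat.pow_le_pow_left (Nat.le_succ _) _
          _ ≤ (s.card + 1) ^ M :=
            Nat.pow_le_pow_right (Nat.succ_pos _) (Nat.lt_succ_iff.mp (mem_range.mp hj))
    _ = (M + 1) * (s.card + 1) ^ M := by simp

section SparseCombinations

variable {F : Type*} [NormedAddCommGroup F] [InnerProductSpace ℝ F]

def sparseCombinations (ont : Finset ℕ → ℕ → F) (N M : ℕ) (c : ℝ) : Set F :=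
  {f : F | ∃ I : Finset ℕ, I ⊆ Finset.range N ∧ I.card ≤ M ∧
    ∃ ct : ℕ → ℝ, (∀ i ∈ I, |ct i| ≤ c) ∧ f = ∑ i ∈ I, ct i • ont I i}

theorem sparseCombinations_eq_biUnion (ont : Finset ℕ → ℕ → F) (N M : ℕ) (c : ℝ) :
    sparseCombinations ont N M c = ⋃ I ∈ (range N).powerset.filter (·.card ≤ M),
      (fun x : EuclideanSpace ℝ I => ∑ i, x i • ont I i) '' coeffBox I c := by
  ext f
  simp only [sparseCombinations, coeffBox, mem_filter, mem_powerset, Set.mem_iUnion,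
    Set.mem_image, Set.mem_ofPred_eq, exists_prop]
  constructor
  · rintro ⟨I, hIN, hIM, ct, hct, rfl⟩
    exact ⟨I, ⟨hIN, hIM⟩, WithLp.toLp 2 fun i : I => ct i, fun i => hct i i.2,
      sum_coe_sort I fun i => ct i • ont I i⟩
  · rintro ⟨I, ⟨hIN, hIM⟩, x, hx, rfl⟩
    have hext : ∀ i : I, Function.extend Subtype.val x.ofLp 0 i = x i :=
      Subtype.val_injective.extend_apply _ _
    refine ⟨I, hIN, hIM, Function.extend Subtype.val x.ofLp 0, fun i hi => ?_, ?_⟩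
    · simpa [hext ⟨i, hi⟩] using hx ⟨i, hi⟩
    · rw [← sum_coe_sort I]
      simp_rw [hext]

theorem exists_finset_isCover_sparseCombinations {ont : Finset ℕ → ℕ → F}
    (hont : ∀ I : Finset ℕ, Orthonormal ℝ (fun i : I => ont I i)) {c : ℝ} (hc : 0 < c)
    (N M : ℕ) {K : ℕ} (hK : 0 < K) :
    ∃ X : Finset F, ↑X ⊆ sparseCombinations ont N M c ∧
      IsCover (√M * (2 * c / K)).toNNReal (sparseCombinations ont N M c) X ∧
      X.card ≤ (4 * (N + 1) * K) ^ M := by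
  classical
  choose B hBcard hBbox hBcover using
    fun I : Finset ℕ => exists_finset_isCover_coeffBox I hc hK
  set supports := (range N).powerset.filter (·.card ≤ M)
  set synth := fun (I : Finset ℕ) (x : EuclideanSpace ℝ I) => ∑ i, x i • ont I i
  refine ⟨supports.biUnion fun I => (B I).image (synth I), ?_, ?_, ?_⟩
  · rw [sparseCombinations_eq_biUnion, coe_biUnion]
    refine Set.iUnion₂_mono fun I _ => ?_
    rw [coe_image]
    exact Set.image_mono (hBbox I)
  · rw [sparseCombinations_eq_biUnion, coe_biUnion]
    refine IsCover.biUnion fun I hI => ?_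
    rw [coe_image]
    refine ((hBcover I).image_lipschitz (hont I).isometry_sum_smul.lipschitz).mono_radius ?_
    rw [one_mul]
    gcongr
    simpa using (mem_filter.mp hI).2
  · calc _ ≤ ∑ I ∈ supports, ((B I).image (synth I)).card := card_biUnion_le
      _ ≤ ∑ _I ∈ supports, (K + 1) ^ M := by
        refine sum_le_sum fun I hI => card_image_le.trans ((hBcard I).trans ?_)
        simpa using Nat.pow_le_pow_right (Nat.succ_pos K) (mem_filter.mp hI).2
      _ ≤ (M + 1) * (N + 1) ^ M * (K + 1) ^ M := by
        rw [sum_const, smul_eq_mul]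
        gcongr
        simpa using card_powerset_filter_card_le (range N) M
      _ ≤ 2 ^ M * (N + 1) ^ M * (2 * K) ^ M := by
        gcongr
        · exact Nat.lt_two_pow_self
        · omega
      _ = (4 * (N + 1) * K) ^ M := by rw [← mul_pow, ← mul_pow]; ring

end SparseCombinations

theorem exists_logb_le_mul_rpow_of_le_pow {B : ℝ} (hB : 0 < B) (p : ℕ) {h : ℝ} (hh : 0 < h) :
    ∃ C : ℝ, 0 < C ∧ ∀ M : ℕ, 1 ≤ M → ∀ n : ℕ, (n : ℝ) ≤ (B * M ^ p) ^ M →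
      Real.logb 2 n ≤ C * (M : ℝ) ^ (1 + h) := by
  have hlog2 : 0 < Real.log 2 := Real.log_pos one_lt_two
  refine ⟨|Real.logb 2 B| + p / (h * Real.log 2) + 1, by positivity, fun M hM n hn => ?_⟩
  have hM₀ : (0 : ℝ) < M := by exact_mod_cast hM
  have hMh : 1 ≤ (M : ℝ) ^ h := Real.one_le_rpow (by exact_mod_cast hM) hh.le
  have hlogM : Real.logb 2 M ≤ (M : ℝ) ^ h / (h * Real.log 2) := by
    rw [Real.logb, ← div_div]
    gcongr
    exact Real.log_le_rpow_div hM₀.le hh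
  rcases n.eq_zero_or_pos with rfl | hn₀
  · simp only [Nat.cast_zero, Real.logb_zero]; positivity
  calc Real.logb 2 n ≤ Real.logb 2 ((B * M ^ p) ^ M) :=
        Real.logb_le_logb_of_le one_lt_two (by exact_mod_cast hn₀) hn
    _ = M * (Real.logb 2 B + p * Real.logb 2 M) := by
        rw [Real.logb_pow, Real.logb_mul hB.ne' (by positivity), Real.logb_pow]
    _ ≤ M * (|Real.logb 2 B| * M ^ h + p * (M ^ h / (h * Real.log 2)) + M ^ h) := by
        have hB' : Real.logb 2 B ≤ |Real.logb 2 B| * M ^ h :=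
          (le_abs_self _).trans (le_mul_of_one_le_right (abs_nonneg _) hMh)
        have hM' : p * Real.logb 2 M ≤ p * (M ^ h / (h * Real.log 2)) := by gcongr
        exact mul_le_mul_of_nonneg_left (by linarith) hM₀.le
    _ = _ := by rw [Real.rpow_add hM₀, Real.rpow_one]; ring

theorem sqrt_mul_div_pow_le_mul_rpow_neg {x : ℝ} (hx : 1 ≤ x) {a : ℝ} (ha : 0 ≤ a) {γ : ℝ}
    {g : ℕ} (hγ : γ ≤ g) : √x * (a / x ^ (g + 1)) ≤ a * x ^ (-γ) := by
  have hpow : √x / x ^ (g + 1) ≤ x ^ (-γ) := by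
    rw [Real.sqrt_eq_rpow, ← Real.rpow_natCast, ← Real.rpow_sub (by linarith)]
    exact Real.rpow_le_rpow_of_exponent_le hx (by push_cast; linarith)
  calc √x * (a / x ^ (g + 1)) = a * (√x / x ^ (g + 1)) := by ring
    _ ≤ a * x ^ (-γ) := by gcongr

theorem orthonormalized_dictionary_infty_encodable_general {F : Type*} [NormedAddCommGroup F]
    [InnerProductSpace ℝ F]
    (π : ℕ → ℕ)
    (hπ : ∃ Cp : ℝ, 0 < Cp ∧ ∃ k : ℕ, ∀ M : ℕ, 1 ≤ M → (π M : ℝ) ≤ Cp * (M : ℝ) ^ k)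
    (ont : Finset ℕ → ℕ → F)
    (hont : ∀ I : Finset ℕ, Orthonormal ℝ (fun i : I => ont I i))
    (c : ℝ) (hc : 0 < c) :
    ∀ γ : ℝ, 0 < γ →
      IsEncodable
        (fun M : ℕ =>
          {f : F | ∃ I : Finset ℕ, I ⊆ Finset.range (π M) ∧ I.card ≤ M ∧
            ∃ ct : ℕ → ℝ, (∀ i ∈ I, |ct i| ≤ c) ∧ f = ∑ i ∈ I, ct i • ont I i}) γ := by
  show ∀ γ : ℝ, 0 < γ → IsEncodable (fun M => sparseCombinations ont (π M) M c) γ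
  obtain ⟨Cp, hCp, k, hπk⟩ := hπ
  intro γ hγ h hh
  set g := ⌈γ⌉₊
  obtain ⟨C, hC, hlog⟩ :=
    exists_logb_le_mul_rpow_of_le_pow (B := 4 * (Cp + 1)) (by positivity) (k + g + 1) hh
  refine ⟨2 * c, by positivity, C, hC, fun M hM => ?_⟩
  have hM' : (1 : ℝ) ≤ M := by exact_mod_cast hM
  obtain ⟨X, hXsub, hXcover, hXcard⟩ :=
    exists_finset_isCover_sparseCombinations hont hc (π M) M (pow_pos hM (g + 1))
  refine ⟨X, hXsub, hXcover.subset_iUnion_closedBall.trans ?_, hlog M hM X.card ?_⟩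
  · refine Set.iUnion₂_mono fun y _ => closedBall_subset_closedBall ?_
    rw [Real.coe_toNNReal _ (by positivity)]
    push_cast
    exact sqrt_mul_div_pow_le_mul_rpow_neg hM' (by positivity) (Nat.le_ceil γ)
  · have hπM : (π M : ℝ) + 1 ≤ (Cp + 1) * M ^ k := by
      nlinarith [hπk M hM, one_le_pow₀ (n := k) hM']
    calc (X.card : ℝ) ≤ (4 * (π M + 1) * M ^ (g + 1)) ^ M := by exact_mod_cast hXcard
      _ ≤ (4 * ((Cp + 1) * M ^ k) * M ^ (g + 1)) ^ M := by gcongr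
      _ = (4 * (Cp + 1) * M ^ (k + g + 1)) ^ M := by ring

/-- In a Hilbert space, the sets `Σ̃^{π,c}_M` of linear combinations of at
most `M` orthonormalized atoms among the first `π(M)` dictionary elements, with coefficients
bounded by `c`, form an `∞`-encodable sequence (for `π` of at most polynomial growth). -/
theorem orthonormalized_dictionary_infty_encodable {F : Type*} [NormedAddCommGroup F]
    [InnerProductSpace ℝ F] [CompleteSpace F]
    (φ : ℕ → F) (π : ℕ → ℕ)
    (hπ : ∃ Cp : ℝ, 0 < Cp ∧ ∃ k : ℕ, ∀ M : ℕ, 1 ≤ M → (π M : ℝ) ≤ Cp * (M : ℝ) ^ k)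
    (ont : Finset ℕ → ℕ → F)
    (hont : ∀ I : Finset ℕ, Orthonormal ℝ (fun i : I => ont I i))
    (c : ℝ) (hc : 0 < c) :
    ∀ γ : ℝ, 0 < γ →
      IsEncodable
        (fun M : ℕ =>
          {f : F | ∃ I : Finset ℕ, I ⊆ Finset.range (π M) ∧ I.card ≤ M ∧
            ∃ ct : ℕ → ℝ, (∀ i ∈ I, |ct i| ≤ c) ∧ f = ∑ i ∈ I, ct i • ont I i}) γ :=
  orthonormalized_dictionary_infty_encodable_general π hπ ont hont c hc

end
end

section
/- Let 𝔽 be a Hilbert space, D = (φ_i) a dictionary, π of polynomial growth, Σ^π_M = { Σ_{i∈I} c_i φ_i : I ⊆ {1,…,π(M)}, |I| ≤ M, c_i ∈ ℝ } and Σ̃^{π,c}_M the corresponding sets with orthonormalized atoms and coefficients bounded by c. Then for every bounded set C ⊆ 𝔽, γ*(C|Σ^π) = max_{c>0} γ*(C|Σ̃^{π,c}); in particular, equality is attained for any c ≥ sup_{f∈C} ‖f‖. -/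
/-!
Inside a fixed span `span {φ_i : i ∈ I}` the orthogonal projection of `f` is a best approximant,
and its coefficients in the orthonormal basis `(φ̃^I_i)` are inner products `⟨f, φ̃^I_i⟩`, hence
bounded by `‖f‖`. So for `c ≥ sup_C ‖f‖` the sets `Σ^π_M` and `Σ̃^{π,c}_M` are at the same distance
from every `f ∈ C`, while `Σ̃^{π,c}_M ⊆ Σ^π_M` bounds every speed `γ*(C|Σ̃^{π,c})` by `γ*(C|Σ^π)`.
-/

open scoped ENNReal BigOperators
open Filter

noncomputable section

section OrthogonalProjection

variable {ι F : Type*} [NormedAddCommGroup F]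

theorem Orthonormal.inner_sum_smul_of_mem {𝕜 : Type*} [RCLike 𝕜] [InnerProductSpace 𝕜 F]
    {I : Finset ι} {e : ι → F} (he : Orthonormal 𝕜 (fun i : I => e i)) (a : ι → 𝕜) {j : ι}
    (hj : j ∈ I) : inner 𝕜 (e j) (∑ i ∈ I, a i • e i) = a j := by
  rw [← Finset.sum_coe_sort I]
  exact he.inner_right_fintype (fun i : I => a i) ⟨j, hj⟩

theorem Orthonormal.exists_best_approx_abs_coeff_le_norm [InnerProductSpace ℝ F]
    {I : Finset ι} {e : ι → F} (he : Orthonormal ℝ (fun i : I => e i)) (f : F) :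
    ∃ a : ι → ℝ, (∀ i ∈ I, |a i| ≤ ‖f‖) ∧
      ∀ g ∈ Submodule.span ℝ (e '' ↑I), ‖f - ∑ i ∈ I, a i • e i‖ ≤ ‖f - g‖ := by
  set K := Submodule.span ℝ (e '' ↑I)
  have : FiniteDimensional ℝ K := FiniteDimensional.span_of_finite ℝ (I.finite_toSet.image e)
  obtain ⟨a, ha⟩ := (Submodule.mem_span_image_finset_iff_exists_fun' ℝ).mp
    (K.starProjection_apply_mem f)
  refine ⟨a, fun i hi => ?_, fun g hg => ?_⟩
  · calc |a i| = |inner ℝ (e i) (K.starProjection f)| := by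
          rw [← ha, he.inner_sum_smul_of_mem a hi]
      _ ≤ ‖e i‖ * ‖K.starProjection f‖ := abs_real_inner_le_norm _ _
      _ ≤ ‖f‖ := by
          rw [show ‖e i‖ = 1 from he.1 ⟨i, hi⟩, one_mul]
          exact K.norm_starProjection_apply_le f
  · rw [ha, K.starProjection_minimal f]
    exact ciInf_le ⟨0, Set.forall_mem_range.mpr fun _ => norm_nonneg _⟩ (⟨g, hg⟩ : K)

end OrthogonalProjection

theorem approxSpeed_anti {F : Type*} [PseudoMetricSpace F] {C : Set F} {S T : ℕ → Set F}
    (h : ∀ M, ∀ f ∈ C, Metric.infDist f (S M) ≤ Metric.infDist f (T M)) :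
    approxSpeed C T ≤ approxSpeed C S := by
  refine sSup_le_sSup ?_
  rintro x ⟨γ, rfl, c, hc, hev⟩
  exact ⟨γ, rfl, c, hc, hev.mono fun M hM f hf => (h M f hf).trans (hM f hf)⟩

theorem approxSpeed_congr {F : Type*} [PseudoMetricSpace F] {C : Set F} {S T : ℕ → Set F}
    (h : ∀ M, ∀ f ∈ C, Metric.infDist f (S M) = Metric.infDist f (T M)) :
    approxSpeed C S = approxSpeed C T :=
  le_antisymm (approxSpeed_anti fun M f hf => (h M f hf).ge)
    (approxSpeed_anti fun M f hf => (h M f hf).le)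

section SparseApproximation

variable {F : Type*} [NormedAddCommGroup F] [InnerProductSpace ℝ F]

/-- `Σ^π_M`. -/
def dictSparse (φ : ℕ → F) (π : ℕ → ℕ) (M : ℕ) : Set F :=
  {f : F | ∃ I : Finset ℕ, I ⊆ Finset.range (π M) ∧ I.card ≤ M ∧
    ∃ co : ℕ → ℝ, f = ∑ i ∈ I, co i • φ i}

/-- `Σ̃^{π,c}_M`, where `ont I` is the orthonormalization `(φ̃^I_i)` of `(φ_i)_{i ∈ I}`. -/
def orthoSparse (ont : Finset ℕ → ℕ → F) (π : ℕ → ℕ) (c : ℝ) (M : ℕ) : Set F :=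
  {f : F | ∃ I : Finset ℕ, I ⊆ Finset.range (π M) ∧ I.card ≤ M ∧
    ∃ ct : ℕ → ℝ, (∀ i ∈ I, |ct i| ≤ c) ∧ f = ∑ i ∈ I, ct i • ont I i}

variable {φ : ℕ → F} {ont : Finset ℕ → ℕ → F}

theorem zero_mem_orthoSparse (π : ℕ → ℕ) (c : ℝ) (M : ℕ) : (0 : F) ∈ orthoSparse ont π c M :=
  ⟨∅, by simp, by simp, 0, by simp, by simp⟩

theorem zero_mem_dictSparse (π : ℕ → ℕ) (M : ℕ) : (0 : F) ∈ dictSparse φ π M :=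
  ⟨∅, by simp, by simp, 0, by simp⟩

theorem orthoSparse_subset_dictSparse
    (hspan : ∀ I : Finset ℕ, Submodule.span ℝ (ont I '' ↑I) = Submodule.span ℝ (φ '' ↑I))
    (π : ℕ → ℕ) (c : ℝ) (M : ℕ) : orthoSparse ont π c M ⊆ dictSparse φ π M := by
  rintro _ ⟨I, hIπ, hIM, ct, -, rfl⟩
  have hmem : ∑ i ∈ I, ct i • ont I i ∈ Submodule.span ℝ (φ '' ↑I) := by
    rw [← hspan]
    exact (Submodule.mem_span_image_finset_iff_exists_fun' ℝ).mpr ⟨ct, rfl⟩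
  obtain ⟨co, hco⟩ := (Submodule.mem_span_image_finset_iff_exists_fun' ℝ).mp hmem
  exact ⟨I, hIπ, hIM, co, hco.symm⟩

theorem infDist_dictSparse_eq_orthoSparse
    (hont : ∀ I : Finset ℕ, Orthonormal ℝ (fun i : I => ont I i))
    (hspan : ∀ I : Finset ℕ, Submodule.span ℝ (ont I '' ↑I) = Submodule.span ℝ (φ '' ↑I))
    (π : ℕ → ℕ) {c : ℝ} {f : F} (hf : ‖f‖ ≤ c) (M : ℕ) :
    Metric.infDist f (dictSparse φ π M) = Metric.infDist f (orthoSparse ont π c M) := by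
  refine le_antisymm (Metric.infDist_le_infDist_of_subset
    (orthoSparse_subset_dictSparse hspan π c M) ⟨0, zero_mem_orthoSparse π c M⟩) ?_
  refine (Metric.le_infDist ⟨0, zero_mem_dictSparse π M⟩).mpr ?_
  rintro _ ⟨I, hIπ, hIM, co, rfl⟩
  obtain ⟨a, ha, hbest⟩ := (hont I).exists_best_approx_abs_coeff_le_norm f
  have hg : ∑ i ∈ I, co i • φ i ∈ Submodule.span ℝ (ont I '' ↑I) := by
    rw [hspan]
    exact (Submodule.mem_span_image_finset_iff_exists_fun' ℝ).mpr ⟨co, rfl⟩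
  have hproj : ∑ i ∈ I, a i • ont I i ∈ orthoSparse ont π c M :=
    ⟨I, hIπ, hIM, a, fun i hi => (ha i hi).trans hf, rfl⟩
  refine (Metric.infDist_le_dist_of_mem hproj).trans ?_
  rw [dist_eq_norm, dist_eq_norm]
  exact hbest _ hg

end SparseApproximation

theorem approxSpeed_dictionary_eq_sup_orthonormalized_general {F : Type*} [NormedAddCommGroup F]
    [InnerProductSpace ℝ F]
    (φ : ℕ → F) (π : ℕ → ℕ)
    (ont : Finset ℕ → ℕ → F)
    (hont : ∀ I : Finset ℕ, Orthonormal ℝ (fun i : I => ont I i))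
    (hspan : ∀ I : Finset ℕ,
      Submodule.span ℝ (ont I '' ↑I) = Submodule.span ℝ (φ '' ↑I))
    (C : Set F) (hC : Bornology.IsBounded C) :
    (approxSpeed C (fun M : ℕ =>
        {f : F | ∃ I : Finset ℕ, I ⊆ Finset.range (π M) ∧ I.card ≤ M ∧
          ∃ co : ℕ → ℝ, f = ∑ i ∈ I, co i • φ i}) =
      ⨆ (c : ℝ) (_ : 0 < c), approxSpeed C (fun M : ℕ =>
        {f : F | ∃ I : Finset ℕ, I ⊆ Finset.range (π M) ∧ I.card ≤ M ∧
          ∃ ct : ℕ → ℝ, (∀ i ∈ I, |ct i| ≤ c) ∧ f = ∑ i ∈ I, ct i • ont I i})) ∧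
    ∀ c : ℝ, (∀ f ∈ C, ‖f‖ ≤ c) →
      approxSpeed C (fun M : ℕ =>
        {f : F | ∃ I : Finset ℕ, I ⊆ Finset.range (π M) ∧ I.card ≤ M ∧
          ∃ ct : ℕ → ℝ, (∀ i ∈ I, |ct i| ≤ c) ∧ f = ∑ i ∈ I, ct i • ont I i}) =
      approxSpeed C (fun M : ℕ =>
        {f : F | ∃ I : Finset ℕ, I ⊆ Finset.range (π M) ∧ I.card ≤ M ∧
          ∃ co : ℕ → ℝ, f = ∑ i ∈ I, co i • φ i}) := by
  change approxSpeed C (dictSparse φ π) =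
      ⨆ (c : ℝ) (_ : 0 < c), approxSpeed C (orthoSparse ont π c) ∧
    ∀ c : ℝ, (∀ f ∈ C, ‖f‖ ≤ c) →
      approxSpeed C (orthoSparse ont π c) = approxSpeed C (dictSparse φ π)
  have hattained : ∀ c : ℝ, (∀ f ∈ C, ‖f‖ ≤ c) →
      approxSpeed C (orthoSparse ont π c) = approxSpeed C (dictSparse φ π) :=
    fun c hc => approxSpeed_congr fun M f hf =>
      (infDist_dictSparse_eq_orthoSparse hont hspan π (hc f hf) M).symm
  refine ⟨le_antisymm ?_ ?_, hattained⟩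
  · obtain ⟨r, hr⟩ := hC.subset_closedBall 0
    have hCr : ∀ f ∈ C, ‖f‖ ≤ max r 1 := fun f hf =>
      (mem_closedBall_zero_iff.mp (hr hf)).trans (le_max_left r 1)
    rw [← hattained _ hCr]
    exact le_iSup₂ (f := fun (c : ℝ) (_ : 0 < c) => approxSpeed C (orthoSparse ont π c))
      (max r 1) (one_pos.trans_le (le_max_right r 1))
  · exact iSup₂_le fun c _ => approxSpeed_anti fun M f _ =>
      Metric.infDist_le_infDist_of_subset (orthoSparse_subset_dictSparse hspan π c M)
        ⟨0, zero_mem_orthoSparse π c M⟩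

/-- In a Hilbert space, for every bounded set `C`, the approximation speed
of `C` by the dictionary sets `Σ^π` equals the supremum over `c > 0` of the speeds by the
orthonormalized, coefficient-bounded sets `Σ̃^{π,c}`; moreover equality is attained for any
`c ≥ sup_{f∈C} ‖f‖`. -/
theorem approxSpeed_dictionary_eq_sup_orthonormalized {F : Type*} [NormedAddCommGroup F]
    [InnerProductSpace ℝ F] [CompleteSpace F]
    (φ : ℕ → F) (π : ℕ → ℕ)
    (hπ : ∃ Cp : ℝ, 0 < Cp ∧ ∃ k : ℕ, ∀ M : ℕ, 1 ≤ M → (π M : ℝ) ≤ Cp * (M : ℝ) ^ k)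
    (ont : Finset ℕ → ℕ → F)
    (hont : ∀ I : Finset ℕ, Orthonormal ℝ (fun i : I => ont I i))
    (hspan : ∀ I : Finset ℕ,
      Submodule.span ℝ (ont I '' ↑I) = Submodule.span ℝ (φ '' ↑I))
    (C : Set F) (hC : Bornology.IsBounded C) :
    (approxSpeed C (fun M : ℕ =>
        {f : F | ∃ I : Finset ℕ, I ⊆ Finset.range (π M) ∧ I.card ≤ M ∧
          ∃ co : ℕ → ℝ, f = ∑ i ∈ I, co i • φ i}) =
      ⨆ (c : ℝ) (_ : 0 < c), approxSpeed C (fun M : ℕ =>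
        {f : F | ∃ I : Finset ℕ, I ⊆ Finset.range (π M) ∧ I.card ≤ M ∧
          ∃ ct : ℕ → ℝ, (∀ i ∈ I, |ct i| ≤ c) ∧ f = ∑ i ∈ I, ct i • ont I i})) ∧
    ∀ c : ℝ, (∀ f ∈ C, ‖f‖ ≤ c) →
      approxSpeed C (fun M : ℕ =>
        {f : F | ∃ I : Finset ℕ, I ⊆ Finset.range (π M) ∧ I.card ≤ M ∧
          ∃ ct : ℕ → ℝ, (∀ i ∈ I, |ct i| ≤ c) ∧ f = ∑ i ∈ I, ct i • ont I i}) =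
      approxSpeed C (fun M : ℕ =>
        {f : F | ∃ I : Finset ℕ, I ⊆ Finset.range (π M) ∧ I.card ≤ M ∧
          ∃ co : ℕ → ℝ, f = ∑ i ∈ I, co i • φ i}) :=
  approxSpeed_dictionary_eq_sup_orthonormalized_general φ π ont hont hspan C hC
end
end

section
/- Let (𝔽,d) be a Hilbert space and, under the polynomial-growth dictionary setup, let A^α(𝔽,Σ^π,β) be the set of f ∈ 𝔽 with ‖f‖ ≤ β and sup_{M≥1} M^α d(f, Σ^π_M) ≤ β, for α, β > 0. Then the encoding speed satisfies γ*(A^α(𝔽,Σ^π,β)) ≥ α. -/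
open scoped ENNReal BigOperators
open Filter

noncomputable section

/-!
Take `M ≍ ε^{-1/α}`. Every `f` in the ball lies within `2βM^{-α}` of an `M`-term sum of norm at
most `3β`. Such sums form a union of at most `(M+1)(π M+1)^M` balls in subspaces of dimension at
most `M`, each of which a volume argument covers by `(O(M^α))^M` balls of radius `M^{-α}`. Hence
`log N(ε) = O(M log M) = O(M^{1+h})` for every `h > 0`, which is `O(ε^{-1/γ})` for every `γ < α`;
moving the centres of the cover into the approximation ball only doubles the radius.
-/

open MeasureTheory Metric
open scoped NNReal ENNReal

section Covering

variable {X : Type*}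

lemma Metric.exists_finset_isCover_card_le_of_coveringNumber_le [PseudoEMetricSpace X]
    {ε : ℝ≥0} {A : Set X} {n : ℕ} (h : coveringNumber ε A ≤ n) :
    ∃ D : Finset X, ↑D ⊆ A ∧ IsCover ε A D ∧ D.card ≤ n := by
  obtain ⟨D, hDA, hD, hDcov, hDcard⟩ :=
    exists_set_encard_eq_coveringNumber (h.trans_lt (ENat.natCast_lt_top n)).ne
  refine ⟨hD.toFinset, by simpa using hDA, by simpa using hDcov, ?_⟩
  rw [← ENat.natCast_le_natCast, ← hD.encard_eq_coe_toFinset_card, hDcard]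
  exact h

lemma Metric.coveringNumber_biUnion_le [PseudoEMetricSpace X] {ι : Type*} {ε : ℝ≥0}
    {I : Finset ι} {A : ι → Set X} {n : ℕ} (h : ∀ i ∈ I, coveringNumber ε (A i) ≤ n) :
    coveringNumber ε (⋃ i ∈ I, A i) ≤ (I.card * n : ℕ) := by
  classical
  choose! D hDA hDcov hDcard using
    fun i hi => exists_finset_isCover_card_le_of_coveringNumber_le (h i hi)
  have hcov : IsCover ε (⋃ i ∈ I, A i) ↑(I.biUnion D) := by
    intro x hx
    obtain ⟨i, hi, hxi⟩ := Set.mem_iUnion₂.1 hx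
    obtain ⟨y, hy, hxy⟩ := hDcov i hi hxi
    exact ⟨y, by simpa using ⟨i, hi, hy⟩, hxy⟩
  have hsub : ↑(I.biUnion D) ⊆ ⋃ i ∈ I, A i := by
    simpa using fun i hi => (hDA i hi).trans (Set.subset_biUnion_of_mem (u := A) hi)
  calc coveringNumber ε (⋃ i ∈ I, A i) ≤ (I.biUnion D : Set X).encard :=
        hcov.coveringNumber_le_encard hsub
    _ ≤ (I.card * n : ℕ) := by
        rw [Set.encard_coe_eq_coe_finsetCard, ENat.natCast_le_natCast]
        exact Finset.card_biUnion_le_card_mul _ _ _ hDcard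

lemma exists_finset_subset_covering_of_forall_dist_le [PseudoMetricSpace X] {C S : Set X}
    {N : Finset X} {δ ε : ℝ} (hδ : 0 ≤ δ) (hε : 0 ≤ ε)
    (hC : ∀ x ∈ C, ∃ y ∈ S, dist x y ≤ δ) (hN : S ⊆ ⋃ y ∈ N, closedBall y ε) :
    ∃ D : Finset X, ↑D ⊆ C ∧ C ⊆ ⋃ y ∈ D, closedBall y (2 * (δ + ε)) ∧ D.card ≤ N.card := by
  lift δ to ℝ≥0 using hδ
  lift ε to ℝ≥0 using hε
  have hcov : IsCover (δ + ε) C N := by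
    refine isCover_iff_subset_iUnion_closedBall.2 fun x hx => ?_
    obtain ⟨y, hyS, hxy⟩ := hC x hx
    obtain ⟨z, hzN, hyz⟩ := Set.mem_iUnion₂.1 (hN hyS)
    refine Set.mem_iUnion₂.2 ⟨z, hzN, ?_⟩
    rw [mem_closedBall] at hyz ⊢
    push_cast
    linarith [dist_triangle x y z]
  have hcard : coveringNumber (2 * (δ + ε)) C ≤ N.card :=
    (coveringNumber_two_mul_le_externalCoveringNumber _ C).trans
      (hcov.externalCoveringNumber_le_encard.trans_eq (Set.encard_coe_eq_coe_finsetCard N))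
  obtain ⟨D, hDC, hDcov, hDcard⟩ := exists_finset_isCover_card_le_of_coveringNumber_le hcard
  exact ⟨D, hDC, by simpa using hDcov.subset_iUnion_closedBall, hDcard⟩

end Covering

section Volume

variable {E : Type*} [NormedAddCommGroup E] [NormedSpace ℝ E] [FiniteDimensional ℝ E]

lemma Metric.IsSeparated.card_le_of_subset_closedBall {ε : ℝ≥0} (hε : 0 < ε) {R : ℝ} (hR : 0 ≤ R)
    {t : Finset E} (ht : IsSeparated ε (t : Set E)) (htR : ↑t ⊆ closedBall (0 : E) R) :
    (t.card : ℝ) ≤ (2 * R / ε + 2) ^ Module.finrank ℝ E := by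
  borelize E
  set n := Module.finrank ℝ E
  set μ : Measure E := Measure.addHaar
  have hε' : (0 : ℝ) < ε := hε
  have hdisj : (t : Set E).PairwiseDisjoint (fun y => ball y (ε / 2)) := by
    intro x hx z hz hxz
    refine ball_disjoint_ball ?_
    have hsep : ε < edist x z := ht hx hz hxz
    rw [edist_nndist, ENNReal.coe_lt_coe, ← NNReal.coe_lt_coe, coe_nndist] at hsep
    linarith
  have hsub : ⋃ y ∈ t, ball y (ε / 2) ⊆ ball (0 : E) (R + ε) := by
    refine Set.iUnion₂_subset fun y hy => ball_subset_ball' ?_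
    have hyR := mem_closedBall.1 (htR hy)
    linarith
  have hball (y : E) (r : ℝ) (hr : 0 < r) : μ (ball y r) = ENNReal.ofReal (r ^ n) * μ (ball 0 1) :=
    Measure.addHaar_ball_of_pos μ y hr
  have hvol : (t.card : ℝ≥0∞) * ENNReal.ofReal ((ε / 2) ^ n) * μ (ball 0 1)
      ≤ ENNReal.ofReal ((R + ε) ^ n) * μ (ball 0 1) := by
    calc (t.card : ℝ≥0∞) * ENNReal.ofReal ((ε / 2) ^ n) * μ (ball 0 1)
        = μ (⋃ y ∈ t, ball y (ε / 2)) := by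
          rw [measure_biUnion_finset hdisj fun y _ => measurableSet_ball,
            Finset.sum_congr rfl fun y _ => hball y _ (by positivity), Finset.sum_const,
            nsmul_eq_mul, mul_assoc]
      _ ≤ μ (ball 0 (R + ε)) := measure_mono hsub
      _ = ENNReal.ofReal ((R + ε) ^ n) * μ (ball 0 1) := hball 0 _ (by positivity)
  rw [ENNReal.mul_le_mul_iff_left (measure_ball_pos μ 0 one_pos).ne' measure_ball_lt_top.ne,
    ← ENNReal.ofReal_natCast, ← ENNReal.ofReal_mul (by positivity),
    ENNReal.ofReal_le_ofReal_iff (by positivity), ← le_div_iff₀ (by positivity), ← div_pow] at hvol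
  calc (t.card : ℝ) ≤ ((R + ε) / (ε / 2)) ^ n := hvol
    _ = (2 * R / ε + 2) ^ n := by congr 1; field_simp

lemma Metric.packingNumber_le_of_subset_closedBall {ε : ℝ≥0} (hε : 0 < ε) {R : ℝ} (hR : 0 ≤ R)
    {A : Set E} (hA : A ⊆ closedBall 0 R) :
    packingNumber ε A ≤ ⌊(2 * R / ε + 2) ^ Module.finrank ℝ E⌋₊ := by
  refine iSup₂_le fun C hCA => iSup_le fun hC => ?_
  by_contra! hlt
  obtain ⟨t, htC, htcard⟩ := Set.exists_subset_encard_eq (Order.add_one_le_of_lt hlt)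
  have htfin : t.Finite := Set.finite_of_encard_eq_coe htcard
  have hbound := Metric.IsSeparated.card_le_of_subset_closedBall hε hR (t := htfin.toFinset)
    (by simpa using hC.subset htC) (by simpa using htC.trans (hCA.trans hA))
  rw [htfin.encard_eq_coe_toFinset_card] at htcard
  have hcard : htfin.toFinset.card = ⌊(2 * R / ε + 2) ^ Module.finrank ℝ E⌋₊ + 1 := by
    exact_mod_cast htcard
  rw [hcard] at hbound
  push_cast at hbound
  linarith [Nat.lt_floor_add_one ((2 * R / ε + 2) ^ Module.finrank ℝ E)]

lemma Metric.coveringNumber_le_of_subset_closedBall {ε : ℝ≥0} (hε : 0 < ε) {R : ℝ} (hR : 0 ≤ R)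
    {A : Set E} (hA : A ⊆ closedBall 0 R) :
    coveringNumber ε A ≤ ⌊(2 * R / ε + 2) ^ Module.finrank ℝ E⌋₊ :=
  (coveringNumber_le_packingNumber ε A).trans (packingNumber_le_of_subset_closedBall hε hR hA)

end Volume

lemma Metric.coveringNumber_le_of_subset_submodule {F : Type*} [NormedAddCommGroup F]
    [NormedSpace ℝ F] (V : Submodule ℝ F) [FiniteDimensional ℝ V] {ε : ℝ≥0} (hε : 0 < ε)
    {R : ℝ} (hR : 0 ≤ R) {A : Set F} (hAV : A ⊆ V) (hA : A ⊆ closedBall 0 R) :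
    coveringNumber ε A ≤ ⌊(2 * R / ε + 2) ^ Module.finrank ℝ V⌋₊ := by
  have hiso := (isometry_subtype_coe : Isometry (Subtype.val : V → F)).coveringNumber_image
    (ε := ε) (A := Subtype.val ⁻¹' A)
  rw [Set.image_preimage_eq_of_subset (by simpa using hAV)] at hiso
  rw [hiso]
  refine coveringNumber_le_of_subset_closedBall hε hR fun x hx => ?_
  simpa using hA hx

section SparseSums

variable {F : Type*}

-- `sparseSums φ (π M) M` is the paper's `Σ^π_M`.
def sparseSums [AddCommMonoid F] [Module ℝ F] (φ : ℕ → F) (p M : ℕ) : Set F :=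
  {g | ∃ I : Finset ℕ, I ⊆ Finset.range p ∧ I.card ≤ M ∧ ∃ co : ℕ → ℝ, g = ∑ i ∈ I, co i • φ i}

lemma zero_mem_sparseSums [AddCommMonoid F] [Module ℝ F] (φ : ℕ → F) (p M : ℕ) :
    (0 : F) ∈ sparseSums φ p M :=
  ⟨∅, Finset.empty_subset _, by simp, 0, by simp⟩

lemma sparseSums_eq_biUnion [AddCommMonoid F] [Module ℝ F] (φ : ℕ → F) (p M : ℕ) :
    sparseSums φ p M = ⋃ I ∈ (Finset.range p).powerset.filter (·.card ≤ M),
      Set.range fun co : ℕ → ℝ => ∑ i ∈ I, co i • φ i := by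
  ext g
  simp only [sparseSums, Set.mem_iUnion, Finset.mem_filter,
    Finset.mem_powerset, Set.mem_range, exists_prop, and_assoc, eq_comm]
  rfl

lemma card_filter_powerset_range_le (p M : ℕ) :
    ((Finset.range p).powerset.filter (·.card ≤ M)).card ≤ (M + 1) * (p + 1) ^ M := by
  have hsub : (Finset.range p).powerset.filter (·.card ≤ M) ⊆
      (Finset.range (M + 1)).biUnion fun j => (Finset.range p).powersetCard j := by
    intro I hI
    rw [Finset.mem_filter, Finset.mem_powerset] at hI
    exact Finset.mem_biUnion.2 ⟨I.card, Finset.mem_range.2 (Nat.lt_succ_of_le hI.2),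
      Finset.mem_powersetCard.2 ⟨hI.1, rfl⟩⟩
  refine (Finset.card_le_card hsub).trans ?_
  conv_rhs => rw [← Finset.card_range (M + 1)]
  refine Finset.card_biUnion_le_card_mul _ _ _ fun j hj => ?_
  rw [Finset.card_powersetCard, Finset.card_range]
  calc p.choose j ≤ p ^ j := Nat.choose_le_pow p j
    _ ≤ (p + 1) ^ j := Nat.pow_le_pow_left p.le_succ j
    _ ≤ (p + 1) ^ M := Nat.pow_le_pow_right p.succ_pos (Nat.lt_succ_iff.1 (Finset.mem_range.1 hj))

lemma coveringNumber_sparseSums_inter_closedBall_le [NormedAddCommGroup F] [NormedSpace ℝ F]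
    (φ : ℕ → F) (p M : ℕ) {ε : ℝ≥0} (hε : 0 < ε) {R : ℝ} (hR : 0 ≤ R) :
    coveringNumber ε (sparseSums φ p M ∩ closedBall 0 R) ≤
      ((M + 1) * (p + 1) ^ M * ⌊(2 * R / ε + 2) ^ M⌋₊ : ℕ) := by
  classical
  rw [sparseSums_eq_biUnion, Set.iUnion₂_inter]
  refine (coveringNumber_biUnion_le (n := ⌊(2 * R / ε + 2) ^ M⌋₊) fun I hI => ?_).trans ?_
  · set V := Submodule.span ℝ (I.image φ : Set F)
    have hAV : (Set.range fun co : ℕ → ℝ => ∑ i ∈ I, co i • φ i) ⊆ V := by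
      rintro _ ⟨co, rfl⟩
      exact Submodule.sum_mem _ fun i hi =>
        Submodule.smul_mem _ _ (Submodule.subset_span (by simpa using Finset.mem_image_of_mem φ hi))
    have hdim : Module.finrank ℝ V ≤ M :=
      calc Module.finrank ℝ V ≤ (I.image φ).card := finrank_span_finset_le_card _
        _ ≤ I.card := Finset.card_image_le
        _ ≤ M := (Finset.mem_filter.1 hI).2
    refine (coveringNumber_le_of_subset_submodule V hε hR (Set.inter_subset_left.trans hAV)
      Set.inter_subset_right).trans (ENat.natCast_le_natCast.2 (Nat.floor_mono ?_))
    exact pow_le_pow_right₀ (by linarith [show 0 ≤ 2 * R / ε by positivity]) hdim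
  · exact ENat.natCast_le_natCast.2
      (Nat.mul_le_mul_right _ (card_filter_powerset_range_le p M))

end SparseSums

lemma exists_mul_logb_le_rpow {A : ℝ} (hA : 0 < A) (b : ℕ) {h : ℝ} (hh : 0 < h) :
    ∃ c : ℝ, 0 < c ∧ ∀ m : ℝ, 1 ≤ m → m * Real.logb 2 (A * m ^ b) ≤ c * m ^ (1 + h) := by
  have hlog2 : 0 < Real.log 2 := Real.log_pos one_lt_two
  refine ⟨|Real.logb 2 A| + b / (h * Real.log 2) + 1, by positivity, fun m hm => ?_⟩
  have hm0 : 0 < m := by linarith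
  have hlogm : Real.logb 2 m ≤ m ^ h / (h * Real.log 2) := by
    rw [Real.logb, ← div_div, div_le_div_iff_of_pos_right hlog2]
    exact Real.log_le_rpow_div hm0.le hh
  have hmh : m * m ^ h = m ^ (1 + h) := by rw [Real.rpow_add hm0, Real.rpow_one]
  have hm1h : m ≤ m ^ (1 + h) := Real.self_le_rpow_of_one_le hm (by linarith)
  have hlogA : m * Real.logb 2 A ≤ |Real.logb 2 A| * m ^ (1 + h) := by
    nlinarith [le_abs_self (Real.logb 2 A), abs_nonneg (Real.logb 2 A)]
  have hb : m * (b * Real.logb 2 m) ≤ b / (h * Real.log 2) * m ^ (1 + h) :=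
    calc m * (b * Real.logb 2 m) ≤ m * (b * (m ^ h / (h * Real.log 2))) := by gcongr
      _ = b / (h * Real.log 2) * m ^ (1 + h) := by rw [← hmh]; ring
  rw [Real.logb_mul hA.ne' (pow_pos hm0 b).ne', Real.logb_pow, mul_add]
  linarith [Real.rpow_pos_of_pos hm0 (1 + h)]

theorem isEncodable_sparseSums_inter_closedBall {F : Type*} [NormedAddCommGroup F]
    [NormedSpace ℝ F] (φ : ℕ → F) {π : ℕ → ℕ} {Cp : ℝ} {k : ℕ}
    (hπ : ∀ M : ℕ, 1 ≤ M → (π M : ℝ) ≤ Cp * (M : ℝ) ^ k) {R : ℝ} (hR : 0 ≤ R) (γ : ℝ) :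
    IsEncodable (fun M => sparseSums φ (π M) M ∩ closedBall 0 R) γ := by
  intro h hh
  set A : ℝ := 2 * (|Cp| + 1) * (2 * R + 2)
  set b : ℕ := k + ⌈γ⌉₊
  obtain ⟨c₂, hc₂, hlog⟩ := exists_mul_logb_le_rpow (A := A) (by positivity) b hh
  refine ⟨1, one_pos, c₂, hc₂, fun M hM => ?_⟩
  have hM1 : (1 : ℝ) ≤ M := by exact_mod_cast hM
  have hM0 : (0 : ℝ) < M := by linarith
  set r : ℝ≥0 := ⟨(M : ℝ) ^ (-γ), by positivity⟩
  have hr_coe : (r : ℝ) = (M : ℝ) ^ (-γ) := rfl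
  obtain ⟨X, hXS, hXcov, hXcard⟩ := exists_finset_isCover_card_le_of_coveringNumber_le
    (coveringNumber_sparseSums_inter_closedBall_le φ (π M) M (ε := r)
      (Real.rpow_pos_of_pos hM0 _) hR)
  refine ⟨X, hXS, by simpa [hr_coe] using hXcov.subset_iUnion_closedBall, ?_⟩
  have hr : 2 * R / r = 2 * R * (M : ℝ) ^ γ := by
    rw [hr_coe, Real.rpow_neg hM0.le, div_inv_eq_mul]
  have hcard : (X.card : ℝ) ≤ (A * (M : ℝ) ^ b) ^ M :=
    calc (X.card : ℝ) ≤ (M + 1) * (π M + 1) ^ M * (2 * R * (M : ℝ) ^ γ + 2) ^ M := by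
          refine (Nat.cast_le.2 hXcard).trans ?_
          push_cast
          rw [← hr]
          gcongr
          exact Nat.floor_le (by positivity)
      _ ≤ 2 ^ M * ((|Cp| + 1) * (M : ℝ) ^ k) ^ M * ((2 * R + 2) * (M : ℝ) ^ ⌈γ⌉₊) ^ M := by
          have hγ : (M : ℝ) ^ γ ≤ (M : ℝ) ^ ⌈γ⌉₊ := by
            rw [← Real.rpow_natCast]
            exact Real.rpow_le_rpow_of_exponent_le hM1 (Nat.le_ceil γ)
          have hk : (1 : ℝ) ≤ (M : ℝ) ^ k := one_le_pow₀ hM1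
          have hγ1 : (1 : ℝ) ≤ (M : ℝ) ^ ⌈γ⌉₊ := one_le_pow₀ hM1
          gcongr
          · exact_mod_cast Nat.lt_two_pow_self
          · nlinarith [hπ M hM, le_abs_self Cp]
          · nlinarith
      _ = (A * (M : ℝ) ^ b) ^ M := by
          rw [← mul_pow, ← mul_pow]
          simp only [A, b, pow_add]
          ring
  rcases X.card.eq_zero_or_pos with h0 | hpos
  · rw [h0, Nat.cast_zero, Real.logb_zero]
    positivity
  · calc Real.logb 2 X.card ≤ Real.logb 2 ((A * (M : ℝ) ^ b) ^ M) :=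
          Real.logb_le_logb_of_le one_lt_two (by exact_mod_cast hpos) hcard
      _ = M * Real.logb 2 (A * (M : ℝ) ^ b) := Real.logb_pow _ _ _
      _ ≤ c₂ * (M : ℝ) ^ (1 + h) := hlog M hM1

section EncodingSpeed

variable {X : Type*} [PseudoMetricSpace X]

lemma le_encodingSpeed_of_forall_lt {C : Set X} {α : ℝ}
    (h : ∀ γ : ℝ, 0 < γ → γ < α → ∃ c : ℝ, 0 < c ∧
      ∀ᶠ ε : ℝ in nhdsWithin 0 (Set.Ioi 0), ∃ D : Finset X, ↑D ⊆ C ∧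
        (C ⊆ ⋃ y ∈ D, closedBall y ε) ∧ (D.card : ℝ) ≤ 2 ^ (c * ε ^ (-(1 / γ)))) :
    (α : EReal) ≤ encodingSpeed C := by
  refine EReal.ge_of_forall_gt_iff_ge.1 fun γ hγα => ?_
  rcases le_or_gt γ 0 with hγ | hγ
  · exact (EReal.coe_le_coe hγ).trans (le_sSup (Set.mem_union_left _ rfl))
  · exact le_sSup (Set.mem_union_right _ ⟨γ, hγ, rfl, h γ hγ (EReal.coe_lt_coe_iff.1 hγα)⟩)

lemma exists_nat_mul_rpow_neg_le {α K ε : ℝ} (hα : 0 < α) (hε : 0 < ε) (hεK : ε ≤ K) :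
    ∃ M : ℕ, 1 ≤ M ∧ K * (M : ℝ) ^ (-α) ≤ ε ∧ (M : ℝ) ≤ 2 * (K / ε) ^ (1 / α) := by
  set x := (K / ε) ^ (1 / α)
  have hKε : 1 ≤ K / ε := (one_le_div hε).2 hεK
  have hx : 1 ≤ x := Real.one_le_rpow hKε (by positivity)
  have hxα : x ^ α = K / ε := by
    rw [← Real.rpow_mul (by positivity), one_div_mul_cancel hα.ne', Real.rpow_one]
  refine ⟨⌈x⌉₊, Nat.one_le_iff_ne_zero.2 (by positivity), ?_, ?_⟩
  · have hM : 0 < (⌈x⌉₊ : ℝ) := by positivity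
    rw [Real.rpow_neg hM.le, ← div_eq_mul_inv, div_le_iff₀ (by positivity), ← div_le_iff₀' hε,
      ← hxα]
    exact Real.rpow_le_rpow (by positivity) (Nat.le_ceil x) hα.le
  · linarith [Nat.ceil_lt_add_one (zero_le_one.trans hx)]

theorem le_encodingSpeed_of_isEncodable {C : Set X} {S : ℕ → Set X} {α c : ℝ} (hc : 0 ≤ c)
    (hS : IsEncodable S α)
    (hC : ∀ M : ℕ, 1 ≤ M → ∀ f ∈ C, ∃ g ∈ S M, dist f g ≤ c * (M : ℝ) ^ (-α)) :
    (α : EReal) ≤ encodingSpeed C := by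
  refine le_encodingSpeed_of_forall_lt fun γ hγ hγα => ?_
  have hα : 0 < α := hγ.trans hγα
  obtain ⟨c₁, hc₁, c₂, hc₂, hN⟩ := hS (α / γ - 1) (by rw [sub_pos, one_lt_div hγ]; exact hγα)
  set K := 2 * (c + c₁)
  have hK : 0 < K := by positivity
  refine ⟨c₂ * 2 ^ (α / γ) * K ^ (1 / γ), by positivity, ?_⟩
  filter_upwards [Ioc_mem_nhdsGT hK] with ε ⟨hε, hεK⟩
  obtain ⟨M, hM, hMε, hMle⟩ := exists_nat_mul_rpow_neg_le hα hε hεK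
  obtain ⟨N, -, hNcov, hNcard⟩ := hN M hM
  obtain ⟨D, hDC, hDcov, hDcard⟩ :=
    exists_finset_subset_covering_of_forall_dist_le (by positivity) (by positivity) (hC M hM) hNcov
  refine ⟨D, hDC, hDcov.trans (Set.iUnion₂_mono fun y _ => closedBall_subset_closedBall ?_), ?_⟩
  · linarith
  have hexp : c₂ * (M : ℝ) ^ (1 + (α / γ - 1)) ≤ c₂ * 2 ^ (α / γ) * K ^ (1 / γ) * ε ^ (-(1 / γ)) :=
    calc c₂ * (M : ℝ) ^ (1 + (α / γ - 1)) ≤ c₂ * (2 * (K / ε) ^ (1 / α)) ^ (α / γ) := by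
          rw [add_sub_cancel]
          gcongr
      _ = c₂ * 2 ^ (α / γ) * K ^ (1 / γ) * ε ^ (-(1 / γ)) := by
          rw [Real.mul_rpow (by norm_num) (by positivity), ← Real.rpow_mul (by positivity),
            Real.div_rpow hK.le hε.le, Real.rpow_neg hε.le]
          field_simp
  rcases N.card.eq_zero_or_pos with h0 | hpos
  · rw [Nat.le_zero.1 (hDcard.trans h0.le), Nat.cast_zero]
    positivity
  calc (D.card : ℝ) ≤ N.card := by exact_mod_cast hDcard
    _ ≤ 2 ^ (c₂ * (M : ℝ) ^ (1 + (α / γ - 1))) :=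
        (Real.logb_le_iff_le_rpow one_lt_two (by exact_mod_cast hpos)).1 hNcard
    _ ≤ 2 ^ (c₂ * 2 ^ (α / γ) * K ^ (1 / γ) * ε ^ (-(1 / γ))) :=
        Real.rpow_le_rpow_of_exponent_le one_le_two hexp

end EncodingSpeed

lemma exists_mem_sparseSums_inter_closedBall_dist_le {F : Type*} [NormedAddCommGroup F]
    [NormedSpace ℝ F] (φ : ℕ → F) (p : ℕ) {α β : ℝ} (hα : 0 < α) (hβ : 0 < β) {M : ℕ}
    (hM : 1 ≤ M) {f : F} (hf : ‖f‖ ≤ β)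
    (hfM : (M : ℝ) ^ α * infDist f (sparseSums φ p M) ≤ β) :
    ∃ g ∈ sparseSums φ p M ∩ closedBall 0 (3 * β), dist f g ≤ 2 * β * (M : ℝ) ^ (-α) := by
  have hM1 : (1 : ℝ) ≤ M := by exact_mod_cast hM
  have hM0 : (0 : ℝ) < M := by linarith
  have hinf : infDist f (sparseSums φ p M) ≤ β * (M : ℝ) ^ (-α) := by
    rw [Real.rpow_neg hM0.le, ← div_eq_mul_inv, le_div_iff₀ (by positivity), mul_comm]
    exact hfM
  set r := β * (M : ℝ) ^ (-α)
  have hr : 0 < r := by positivity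
  have hrβ : r ≤ β :=
    mul_le_of_le_one_right hβ.le (Real.rpow_le_one_of_one_le_of_nonpos hM1 (by linarith))
  obtain ⟨g, hgS, hfg⟩ := (infDist_lt_iff ⟨0, zero_mem_sparseSums φ p M⟩).1
    (hinf.trans_lt (by linarith : r < 2 * r))
  refine ⟨g, ⟨hgS, ?_⟩, by linarith⟩
  rw [mem_closedBall]
  linarith [dist_triangle g f 0, dist_comm f g, dist_zero_right f]

theorem encodingSpeed_approximation_ball_ge_general {F : Type*} [NormedAddCommGroup F]
    [InnerProductSpace ℝ F]
    (φ : ℕ → F) (π : ℕ → ℕ)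
    (hπ : ∃ Cp : ℝ, 0 < Cp ∧ ∃ k : ℕ, ∀ M : ℕ, 1 ≤ M → (π M : ℝ) ≤ Cp * (M : ℝ) ^ k)
    (α β : ℝ) (hα : 0 < α) (hβ : 0 < β) :
    (α : EReal) ≤ encodingSpeed
      {f : F | ‖f‖ ≤ β ∧ ∀ M : ℕ, 1 ≤ M →
        (M : ℝ) ^ α * Metric.infDist f
          {g : F | ∃ I : Finset ℕ, I ⊆ Finset.range (π M) ∧ I.card ≤ M ∧
            ∃ co : ℕ → ℝ, g = ∑ i ∈ I, co i • φ i} ≤ β} := by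
  obtain ⟨Cp, -, k, hπk⟩ := hπ
  refine le_encodingSpeed_of_isEncodable (c := 2 * β) (by positivity)
    (isEncodable_sparseSums_inter_closedBall φ hπk (R := 3 * β) (by positivity) α) ?_
  intro M hM f hf
  exact exists_mem_sparseSums_inter_closedBall_dist_le φ (π M) hα hβ hM hf.1 (hf.2 M hM)

/-- In a Hilbert space, for a dictionary `(φ_i)` and `π` of polynomial
growth, the ball `A^α(𝔽,Σ^π,β)` of the approximation space (functions of norm ≤ β approximated
at rate `M^{−α}` with constant β by `Σ^π_M`) has encoding speed at least `α`. -/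
theorem encodingSpeed_approximation_ball_ge {F : Type*} [NormedAddCommGroup F]
    [InnerProductSpace ℝ F] [CompleteSpace F]
    (φ : ℕ → F) (π : ℕ → ℕ)
    (hπ : ∃ Cp : ℝ, 0 < Cp ∧ ∃ k : ℕ, ∀ M : ℕ, 1 ≤ M → (π M : ℝ) ≤ Cp * (M : ℝ) ^ k)
    (α β : ℝ) (hα : 0 < α) (hβ : 0 < β) :
    (α : EReal) ≤ encodingSpeed
      {f : F | ‖f‖ ≤ β ∧ ∀ M : ℕ, 1 ≤ M →
        (M : ℝ) ^ α * Metric.infDist f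
          {g : F | ∃ I : Finset ℕ, I ⊆ Finset.range (π M) ∧ I.card ≤ M ∧
            ∃ co : ℕ → ℝ, g = ∑ i ∈ I, co i • φ i} ≤ β} :=
  encodingSpeed_approximation_ball_ge_general φ π hπ α β hα hβ
end
end
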